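/- arXiv:2003.11686 — 7 statements merged into one kernel-verified Lean document; each statement's English description precedes it below -/
import Mathlib

section
/- There exists n₀ ∈ ℕ such that the following holds for all n ≥ n₀ with n divisible by 3. Let V = V₀ ∪ V₁ ∪ V₂ be a partition with |V₀| = |V₁| = |V₂| = n/3, and let H₁ be the 3-graph on V whose edges are exactly the triples containing two vertices of V_i and one vertex of V_{i+1} for some i ∈ {0,1,2} (indices modulo 3). Then δ₂(H₁) ≥ n/3 − 1, and there do not exist two vertex-disjoint tight paths in H₁ whose vertex sets together cover all of V. -/
open Finset

variable {V : Type*} [DecidableEq V] [Fintype V]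

/-- A tight path in a 3-graph `H`: a list of distinct vertices in which every 3
consecutive vertices form an edge of `H`. -/
def IsTightPath (H : Finset (Finset V)) (l : List V) : Prop :=
  l.Nodup ∧ ∀ (i : ℕ) (h : i + 2 < l.length),
    ({l[i]'(by omega), l[i + 1]'(by omega), l[i + 2]'(by omega)} : Finset V) ∈ H

/-- The codegree of a pair of vertices. -/
def codeg (H : Finset (Finset V)) (u v : V) : ℕ :=
  (H.filter fun e => u ∈ e ∧ v ∈ e).card

/-- The first end of a tight path `v₁ v₂ ⋯ v_p`, i.e. the ordered pair `(v₂, v₁)`. -/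
def firstEnd (l : List V) : Option (V × V) :=
  match l with
  | a :: b :: _ => some (b, a)
  | _ => none

/-- The last end of a tight path `v₁ v₂ ⋯ v_p`, i.e. the ordered pair `(v_{p-1}, v_p)`. -/
def lastEnd (l : List V) : Option (V × V) :=
  firstEnd l.reverse

/-- The set of vertices covered by a family of paths. -/
def famVerts (Ps : List (List V)) : Finset V :=
  Ps.foldr (fun P s => P.toFinset ∪ s) ∅

/-- A family of pairwise vertex-disjoint tight paths. -/
def PathFamily (H : Finset (Finset V)) (Ps : List (List V)) : Prop :=
  (∀ P ∈ Ps, IsTightPath H P) ∧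
  Ps.Pairwise fun P Q => Disjoint P.toFinset Q.toFinset

/-- Two families of paths have the same length and corresponding members have the same ends. -/
def SameEndsList (Ps Qs : List (List V)) : Prop :=
  Ps.length = Qs.length ∧ ∀ j < Ps.length,
    firstEnd (Ps.getD j []) = firstEnd (Qs.getD j []) ∧
    lastEnd (Ps.getD j []) = lastEnd (Qs.getD j [])

/-- `u` and `v` are `(β, i)`-reachable in `H`. -/
def Reachable (H : Finset (Finset V)) (β : ℝ) (i : ℕ) (u v : V) : Prop :=
  β * (Fintype.card V : ℝ) ^ (5 * i - 1) ≤
    (({T : Finset V | T.card = 5 * i - 1 ∧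
      ∃ Ps Qs : List (List V), Ps.length = i ∧
        (∀ P ∈ Ps, IsTightPath H P ∧ P.length = 5) ∧
        (∀ Q ∈ Qs, IsTightPath H Q ∧ Q.length = 5) ∧
        Ps.Pairwise (fun P P' => Disjoint P.toFinset P'.toFinset) ∧
        Qs.Pairwise (fun Q Q' => Disjoint Q.toFinset Q'.toFinset) ∧
        famVerts Ps = insert u T ∧ famVerts Qs = insert v T ∧
        SameEndsList Ps Qs} : Set (Finset V)).ncard : ℝ)

/-- The set `Ñ_{β,i}(v)` of vertices `(β,i)`-reachable to `v`. -/
def reachSet (H : Finset (Finset V)) (β : ℝ) (i : ℕ) (v : V) : Set V :=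
  {u | u ≠ v ∧ Reachable H β i u v}

/-- A vertex set is `(β, i)`-closed in `H`. -/
def IsClosedSet (H : Finset (Finset V)) (β : ℝ) (i : ℕ) (U : Finset V) : Prop :=
  ∀ u ∈ U, ∀ v ∈ U, u ≠ v → Reachable H β i u v

/-- `Ps` is an `S`-absorber in `H`. -/
def IsAbsorber (H : Finset (Finset V)) (S : Finset V) (Ps : List (List V)) : Prop :=
  PathFamily H Ps ∧ Disjoint (famVerts Ps) S ∧
  ∃ Qs : List (List V), PathFamily H Qs ∧ famVerts Qs = famVerts Ps ∪ S ∧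
    SameEndsList Ps Qs

/-- Two edges of `H` sharing exactly two vertices. -/
def EdgeAdj (H : Finset (Finset V)) (e f : Finset V) : Prop :=
  e ∈ H ∧ f ∈ H ∧ (e ∩ f).card = 2

/-- Two edges lie in the same tight component: they are joined by a pseudo-path. -/
def SameTightComponent (H : Finset (Finset V)) (e f : Finset V) : Prop :=
  e ∈ H ∧ f ∈ H ∧ Relation.ReflTransGen (EdgeAdj H) e f

/-- `H` has at most two tight components: among any three edges two lie in a common
tight component. -/
def AtMostTwoTightComponents (H : Finset (Finset V)) : Prop :=
  ∀ e ∈ H, ∀ f ∈ H, ∀ g ∈ H,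
    SameTightComponent H e f ∨ SameTightComponent H e g ∨ SameTightComponent H f g

/-- The number of edges of `H` containing the set `p`. -/
def degPair (H : Finset (Finset V)) (p : Finset V) : ℕ :=
  (H.filter fun e => p ⊆ e).card

/-- `H` is `(μ, θ)`-dense: all but at most `θ * C(n,2)` pairs have codegree at least `μ n`. -/
def Dense3 (H : Finset (Finset V)) (μ θ : ℝ) : Prop :=
  (({p : Finset V | p.card = 2 ∧ (degPair H p : ℝ) < μ * Fintype.card V} :
      Set (Finset V)).ncard : ℝ) ≤ θ * ((Fintype.card V).choose 2)

/-- `H` is strongly `(μ, θ)`-dense. -/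
def StronglyDense3 (H : Finset (Finset V)) (μ θ : ℝ) : Prop :=
  Dense3 H μ θ ∧ ∀ p : Finset V, p.card = 2 →
    degPair H p = 0 ∨ μ * Fintype.card V ≤ (degPair H p : ℝ)

/-- A tight Hamilton cycle: a cyclic ordering of all vertices in which every 3
cyclically consecutive vertices form an edge. -/
def IsTightHamCycle (H : Finset (Finset V)) (l : List V) : Prop :=
  l.Nodup ∧ l.toFinset = Finset.univ ∧ 3 ≤ l.length ∧
  ∀ (i : ℕ) (h : i < l.length),
    ({l[i]'h, l[(i + 1) % l.length]'(Nat.mod_lt _ (by omega)),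
      l[(i + 2) % l.length]'(Nat.mod_lt _ (by omega))} : Finset V) ∈ H

/-- `H ∗ K_t^{(3)}`: add `t` new vertices and all triples meeting them. -/
def starK (H : Finset (Finset V)) (t : ℕ) : Finset (Finset (V ⊕ Fin t)) :=
  (Finset.univ : Finset (Finset (V ⊕ Fin t))).filter fun e =>
    e.card = 3 ∧ ((∃ x ∈ e, x.isRight = true) ∨ ∃ f ∈ H, e = f.image Sum.inl)

/-- The link of a vertex: the set of pairs forming an edge together with it. -/
def linkPairs (H : Finset (Finset V)) (u : V) : Set (Finset V) :=
  {p | p.card = 2 ∧ u ∉ p ∧ insert u p ∈ H}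

/-!
Colour each vertex by the index of its part; an edge of `H₁` of type `i` has two vertices of
colour `i` and one of colour `i + 1`. Edges of different types share at most one vertex, so all
edges of a tight path on at least three vertices have one type `i`. Such a path avoids colour
`i + 2`, and as every three consecutive vertices contain exactly one vertex of colour `i + 1`, at
most a third of its vertices (rounded up) have that colour.

If two disjoint tight paths covered the `n` vertices, one of them, of type `i`, is long, so the
other contains the whole colour class `i + 2` and is long too, of type `i'`. For `i' = i` colour
`i + 2` would be missed; otherwise one path contains the whole class of its sparse colour, hence
has at least `n - 2` vertices, leaving at most two for the other.
-/

theorem Finset.card_mul_le_of_forall_add_le {S : Finset ℕ} {m d : ℕ} (hS : ∀ a ∈ S, a < m)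
    (hsep : ∀ a ∈ S, ∀ b ∈ S, a < b → a + d ≤ b) : S.card * d ≤ m + d - 1 := by
  have hdisj : (S : Set ℕ).PairwiseDisjoint fun a => Ico a (a + d) := by
    intro a ha b hb hab
    rw [Function.onFun, disjoint_left]
    intro x hxa hxb
    rw [mem_Ico] at hxa hxb
    rcases lt_or_gt_of_ne hab with h | h
    · have := hsep a ha b hb h; omega
    · have := hsep b hb a ha h; omega
  calc S.card * d = (S.biUnion fun a => Ico a (a + d)).card := by
        rw [card_biUnion hdisj]; simp
    _ ≤ (range (m + d - 1)).card := by
        refine card_le_card fun x hx => ?_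
        simp only [mem_biUnion, mem_Ico, mem_range] at hx ⊢
        obtain ⟨a, ha, -, hxa⟩ := hx
        have := hS a ha
        omega
    _ = m + d - 1 := card_range _

section Lists

variable {α : Type*} [DecidableEq α]

theorem List.getElem_mem_triple {l : List α} {k a : ℕ} (hk : k + 2 < l.length) (hka : k ≤ a)
    (hak : a ≤ k + 2) : l[a]'(by omega) ∈ ({l[k], l[k + 1], l[k + 2]} : Finset α) := by
  obtain rfl | rfl | rfl : a = k ∨ a = k + 1 ∨ a = k + 2 := by omega
  all_goals simp

theorem List.exists_triple_mem {l : List α} (h3 : 3 ≤ l.length) {a b : ℕ} (hab : a ≤ b)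
    (hba : b ≤ a + 2) (hb : b < l.length) :
    ∃ k, ∃ hk : k + 2 < l.length, l[a] ∈ ({l[k], l[k + 1], l[k + 2]} : Finset α) ∧
      l[b] ∈ ({l[k], l[k + 1], l[k + 2]} : Finset α) :=
  ⟨min a (l.length - 3), by omega, getElem_mem_triple _ (by omega) (by omega),
    getElem_mem_triple _ (by omega) (by omega)⟩

theorem List.three_mul_card_filter_le {l : List α} (h3 : 3 ≤ l.length) (p : α → Prop)
    [DecidablePred p]
    (hp : ∀ k (hk : k + 2 < l.length),
      (({l[k], l[k + 1], l[k + 2]} : Finset α).filter p).card ≤ 1) :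
    3 * (l.toFinset.filter p).card ≤ l.length + 2 := by
  set F := l.toFinset.filter p
  have hmem : ∀ v ∈ F, v ∈ l := fun v hv => mem_toFinset.mp (Finset.mem_filter.mp hv).1
  have hinj : Set.InjOn l.idxOf F := fun v hv w hw h => by
    rw [← getElem_idxOf (idxOf_lt_length_of_mem (hmem v hv)),
      ← getElem_idxOf (idxOf_lt_length_of_mem (hmem w hw))]
    simp only [h]
  have hS : ∀ a ∈ F.image l.idxOf, a < l.length := by
    simp only [Finset.mem_image]
    rintro _ ⟨v, hv, rfl⟩
    exact idxOf_lt_length_of_mem (hmem v hv)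
  have hsep : ∀ a ∈ F.image l.idxOf, ∀ b ∈ F.image l.idxOf, a < b → a + 3 ≤ b := by
    simp only [Finset.mem_image]
    rintro _ ⟨v, hv, rfl⟩ _ ⟨w, hw, rfl⟩ hvw
    by_contra! hclose
    obtain ⟨k, hk, hvk, hwk⟩ :=
      exists_triple_mem h3 hvw.le (by omega) (idxOf_lt_length_of_mem (hmem w hw))
    rw [getElem_idxOf] at hvk hwk
    have hpair : ({v, w} : Finset α) ⊆ ({l[k], l[k + 1], l[k + 2]} : Finset α).filter p := by
      intro x hx
      rw [Finset.mem_insert, Finset.mem_singleton] at hx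
      rcases hx with rfl | rfl
      · exact Finset.mem_filter.mpr ⟨hvk, (Finset.mem_filter.mp hv).2⟩
      · exact Finset.mem_filter.mpr ⟨hwk, (Finset.mem_filter.mp hw).2⟩
    have := Finset.card_le_card hpair
    rw [Finset.card_pair fun h => hvw.ne (by rw [h])] at this
    have := hp k hk
    omega
  have := Finset.card_mul_le_of_forall_add_le hS hsep
  rw [Finset.card_image_of_injOn hinj] at this
  omega

end Lists

section Colouring

variable {α : Type*} {c : α → Fin 3} {i : Fin 3} {e : Finset α}

def HasType (c : α → Fin 3) (i : Fin 3) (e : Finset α) : Prop :=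
  (e.filter (c · = i)).card = 2 ∧ (e.filter (c · = i + 1)).card = 1

/-- `H₁`, with the parts `V_i` given as the colour classes of `c`. -/
def cyclicGraph [Fintype α] (c : α → Fin 3) : Finset (Finset α) :=
  univ.filter fun e => e.card = 3 ∧
    ∃ i, (e.filter (c · = i)).card = 2 ∧ (e.filter (c · = i + 1)).card = 1

theorem mem_cyclicGraph [Fintype α] :
    e ∈ cyclicGraph c ↔ e.card = 3 ∧ ∃ i, HasType c i e := by
  simp [cyclicGraph, HasType]

theorem HasType.color_eq_or [DecidableEq α] (he : e.card = 3) (h : HasType c i e) {x : α}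
    (hx : x ∈ e) : c x = i ∨ c x = i + 1 := by
  by_contra hcx
  have hsub : e.filter (c · = i) ∪ e.filter (c · = i + 1) ⊆ e.erase x := by
    intro y hy
    simp only [mem_union, mem_filter] at hy
    refine mem_erase.mpr ⟨?_, by tauto⟩
    rintro rfl
    tauto
  have hdisj : Disjoint (e.filter (c · = i)) (e.filter (c · = i + 1)) :=
    disjoint_filter.mpr fun y _ h => by grind
  have := card_le_card hsub
  rw [card_union_of_disjoint hdisj, h.1, h.2, card_erase_of_mem hx, he] at this
  omega

theorem HasType.eq_of_mem_inter_of_succ [DecidableEq α] {f : Finset α} (he : e.card = 3)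
    (hf : f.card = 3) (hte : HasType c i e) (htf : HasType c (i + 1) f) {x y : α}
    (hx : x ∈ e ∩ f) (hy : y ∈ e ∩ f) : x = y := by
  by_contra hxy
  have hcol : ∀ z ∈ e ∩ f, z ∈ e.filter (c · = i + 1) := by
    intro z hz
    rw [mem_inter] at hz
    have := hte.color_eq_or he hz.1
    have := htf.color_eq_or hf hz.2
    exact mem_filter.mpr ⟨hz.1, by grind⟩
  have hsub : ({x, y} : Finset α) ⊆ e.filter (c · = i + 1) := by
    intro z hz
    rw [mem_insert, mem_singleton] at hz
    rcases hz with rfl | rfl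
    exacts [hcol z hx, hcol z hy]
  have := card_le_card hsub
  rw [card_pair hxy, hte.2] at this
  omega

theorem HasType.eq_of_mem_inter [DecidableEq α] {j : Fin 3} {f : Finset α} (he : e.card = 3)
    (hf : f.card = 3) (hte : HasType c i e) (htf : HasType c j f) {x y : α} (hxy : x ≠ y)
    (hx : x ∈ e ∩ f) (hy : y ∈ e ∩ f) : i = j := by
  rcases (by grind : j = i ∨ j = i + 1 ∨ i = j + 1) with h | rfl | rfl
  · exact h.symm
  · exact absurd (hte.eq_of_mem_inter_of_succ he hf htf hx hy) hxy
  · rw [inter_comm] at hx hy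
    exact absurd (htf.eq_of_mem_inter_of_succ hf he hte hx hy) hxy

theorem hasType_triple [DecidableEq α] {x y z : α} (hxy : x ≠ y) (hx : c x = i) (hy : c y = i)
    (hz : c z = i + 1) : ({x, y, z} : Finset α).card = 3 ∧ HasType c i {x, y, z} := by
  have hxz : x ≠ z := fun h => by grind
  have hyz : y ≠ z := fun h => by grind
  refine ⟨card_eq_three.mpr ⟨x, y, z, hxy, hxz, hyz, rfl⟩, ?_, ?_⟩
  · have hzi : c z ≠ i := by grind
    simp [filter_insert, filter_singleton, hx, hy, hzi, card_pair hxy]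
  · have hi : i ≠ i + 1 := by grind
    simp [filter_insert, filter_singleton, hx, hy, hz, hi]

end Colouring

section Codegree

variable {α : Type*} [DecidableEq α]

theorem card_le_codeg {H : Finset (Finset α)} {u v : α} (W : Finset α) (hu : u ∉ W)
    (hv : v ∉ W) (hW : ∀ w ∈ W, ({u, v, w} : Finset α) ∈ H) : W.card ≤ codeg H u v := by
  refine card_le_card_of_injOn (fun w => ({u, v, w} : Finset α)) (fun w hw => ?_) ?_
  · simp only [coe_filter, Set.mem_ofPred_eq]
    exact ⟨hW w hw, by simp, by simp⟩
  · intro w hw w' _ h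
    have : w ∈ ({u, v, w'} : Finset α) := by simp only at h; rw [← h]; simp
    simp only [mem_insert, mem_singleton] at this
    rcases this with rfl | rfl | rfl
    exacts [absurd hw hu, absurd hw hv, rfl]

theorem codeg_comm (H : Finset (Finset α)) (u v : α) : codeg H u v = codeg H v u := by
  simp only [codeg, and_comm]

variable [Fintype α] {c : α → Fin 3} {m : ℕ} {u v : α}

theorem le_codeg_cyclicGraph_of_eq (hc : ∀ j, (univ.filter (c · = j)).card = m) (huv : u ≠ v)
    (h : c u = c v) : m ≤ codeg (cyclicGraph c) u v := by
  rw [← hc (c u + 1)]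
  refine card_le_codeg _ (by simp) (by simp [h]) fun w hw => ?_
  obtain ⟨h3, ht⟩ := hasType_triple huv rfl h.symm (mem_filter.mp hw).2
  exact mem_cyclicGraph.mpr ⟨h3, _, ht⟩

theorem le_codeg_cyclicGraph_of_succ (hc : ∀ j, (univ.filter (c · = j)).card = m)
    (h : c v = c u + 1) : m - 1 ≤ codeg (cyclicGraph c) u v := by
  have hu : u ∈ univ.filter (c · = c u) := by simp
  rw [← hc (c u), ← card_erase_of_mem hu]
  refine card_le_codeg _ (notMem_erase u _) (by simp [h]) fun w hw => ?_
  obtain ⟨hwu, hw⟩ := mem_erase.mp hw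
  obtain ⟨h3, ht⟩ := hasType_triple hwu.symm rfl (mem_filter.mp hw).2 h
  rw [pair_comm]
  exact mem_cyclicGraph.mpr ⟨h3, _, ht⟩

theorem le_codeg_cyclicGraph (hc : ∀ j, (univ.filter (c · = j)).card = m) (huv : u ≠ v) :
    m - 1 ≤ codeg (cyclicGraph c) u v := by
  rcases (by grind : c v = c u ∨ c v = c u + 1 ∨ c u = c v + 1) with h | h | h
  · exact (Nat.sub_le _ _).trans (le_codeg_cyclicGraph_of_eq hc huv h.symm)
  · exact le_codeg_cyclicGraph_of_succ hc h
  · rw [codeg_comm]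
    exact le_codeg_cyclicGraph_of_succ hc h

end Codegree

theorem card_eq_three_mul {α : Type*} [Fintype α] {c : α → Fin 3} {m : ℕ}
    (hc : ∀ j, (univ.filter (c · = j)).card = m) :
    Fintype.card α = 3 * m := by
  rw [← card_univ, card_eq_sum_card_fiberwise (f := c) (t := univ) fun _ _ => mem_univ _]
  simp [hc]

section TightPaths

variable {α : Type*} [DecidableEq α] [Fintype α] {c : α → Fin 3} {l : List α}

theorem IsTightPath.exists_hasType (hP : IsTightPath (cyclicGraph c) l) (h3 : 3 ≤ l.length) :
    ∃ i, ∀ k (hk : k + 2 < l.length), HasType c i {l[k], l[k + 1], l[k + 2]} := by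
  obtain ⟨-, i, hi⟩ := mem_cyclicGraph.mp (hP.2 0 (by omega))
  refine ⟨i, fun k => ?_⟩
  induction k with
  | zero => exact fun _ => hi
  | succ k ih =>
    intro hk
    obtain ⟨hcard, j, hj⟩ := mem_cyclicGraph.mp (hP.2 (k + 1) hk)
    have hne : l[k + 1] ≠ l[k + 2] := fun h => by
      have := hP.1.getElem_inj_iff.mp h
      omega
    have hij := (ih (by omega)).eq_of_mem_inter (mem_cyclicGraph.mp (hP.2 k (by omega))).1
      hcard hj hne (by simp) (by simp)
    exact hij ▸ hj

theorem IsTightPath.exists_sparse_color (hP : IsTightPath (cyclicGraph c) l) (h3 : 3 ≤ l.length) :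
    ∃ i, (∀ v ∈ l, c v ≠ i + 2) ∧
      3 * (l.toFinset.filter (c · = i + 1)).card ≤ l.length + 2 := by
  obtain ⟨i, hi⟩ := hP.exists_hasType h3
  refine ⟨i, fun v hv => ?_, List.three_mul_card_filter_le h3 _ fun k hk => (hi k hk).2.le⟩
  obtain ⟨a, ha, rfl⟩ := List.getElem_of_mem hv
  obtain ⟨k, hk, hak, -⟩ := List.exists_triple_mem h3 le_rfl (by omega) ha
  have := (hi k hk).color_eq_or (mem_cyclicGraph.mp (hP.2 k hk)).1 hak
  grind

theorem filter_toFinset_eq_of_union_eq_univ {P Q : List α} {j : Fin 3}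
    (hcov : P.toFinset ∪ Q.toFinset = univ) (hP : ∀ v ∈ P, c v ≠ j) :
    Q.toFinset.filter (c · = j) = univ.filter (c · = j) := by
  ext v
  have hv : v ∈ P.toFinset ∪ Q.toFinset := hcov ▸ mem_univ v
  simp only [mem_union, List.mem_toFinset] at hv
  simp only [mem_filter, List.mem_toFinset, mem_univ, true_and, and_iff_right_iff_imp]
  rintro rfl
  exact hv.resolve_left fun h => hP v h rfl

theorem not_exists_tightPaths_cover {m : ℕ} (hm : 3 ≤ m)
    (hc : ∀ j, (univ.filter (c · = j)).card = m) :
    ¬ ∃ P₁ P₂ : List α, IsTightPath (cyclicGraph c) P₁ ∧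
      IsTightPath (cyclicGraph c) P₂ ∧ Disjoint P₁.toFinset P₂.toFinset ∧
      P₁.toFinset ∪ P₂.toFinset = univ := by
  rintro ⟨P₁, P₂, h₁, h₂, hdisj, hcov⟩
  have hlen : P₁.length + P₂.length = 3 * m := by
    rw [← List.toFinset_card_of_nodup h₁.1, ← List.toFinset_card_of_nodup h₂.1,
      ← card_union_of_disjoint hdisj, hcov, card_univ, card_eq_three_mul hc]
  wlog hl₁ : 3 ≤ P₁.length generalizing P₁ P₂
  · exact this P₂ P₁ h₂ h₁ hdisj.symm (union_comm P₁.toFinset _ ▸ hcov) (by omega)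
      (by omega)
  obtain ⟨i, hav₁, hcnt₁⟩ := h₁.exists_sparse_color hl₁
  have hC₂ := filter_toFinset_eq_of_union_eq_univ hcov hav₁
  have hl₂ : 3 ≤ P₂.length := calc
    3 ≤ m := hm
    _ = (P₂.toFinset.filter (c · = i + 2)).card := by rw [hC₂, hc]
    _ ≤ P₂.toFinset.card := card_filter_le _ _
    _ ≤ P₂.length := List.toFinset_card_le _
  obtain ⟨i₂, hav₂, hcnt₂⟩ := h₂.exists_sparse_color hl₂
  rcases (by grind : i₂ = i ∨ i₂ = i + 1 ∨ i = i₂ + 1) with rfl | rfl | rfl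
  · obtain ⟨w, hw⟩ : (univ.filter (c · = i₂ + 2)).Nonempty :=
      card_pos.mp (by rw [hc]; omega)
    rw [← hC₂, mem_filter, List.mem_toFinset] at hw
    exact hav₂ w hw.1 hw.2
  · rw [show i + 1 + 1 = i + 2 by grind, hC₂, hc] at hcnt₂
    omega
  · have hC₁ := filter_toFinset_eq_of_union_eq_univ (union_comm P₁.toFinset _ ▸ hcov) hav₂
    rw [show i₂ + 1 + 1 = i₂ + 2 by grind, hC₁, hc] at hcnt₁
    omega

end TightPaths

theorem exists_coloring_of_partition {α ι : Type*} [Fintype α] [DecidableEq α] [Fintype ι]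
    {Vs : ι → Finset α} (hdisj : ∀ i j, i ≠ j → Disjoint (Vs i) (Vs j))
    (hcov : univ.biUnion Vs = univ) : ∃ c : α → ι, ∀ v j, v ∈ Vs j ↔ c v = j := by
  have hex : ∀ v, ∃ i, v ∈ Vs i := fun v => by
    obtain ⟨i, -, hi⟩ := mem_biUnion.mp (hcov.symm ▸ mem_univ v : v ∈ univ.biUnion Vs)
    exact ⟨i, hi⟩
  choose c hc using hex
  refine ⟨c, fun v j => ⟨fun hv => ?_, fun h => h ▸ hc v⟩⟩
  by_contra h
  exact disjoint_left.mp (hdisj _ _ h) (hc v) hv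

theorem statement9 :
    ∃ n₀ : ℕ, ∀ n : ℕ, n₀ ≤ n → 3 ∣ n →
    ∀ Vs : Fin 3 → Finset (Fin n),
      (∀ i j : Fin 3, i ≠ j → Disjoint (Vs i) (Vs j)) →
      Finset.univ.biUnion Vs = (Finset.univ : Finset (Fin n)) →
      (∀ i : Fin 3, (Vs i).card = n / 3) →
      ∀ H : Finset (Finset (Fin n)),
        H = Finset.univ.filter (fun e : Finset (Fin n) => e.card = 3 ∧
          ∃ i : Fin 3, (e ∩ Vs i).card = 2 ∧ (e ∩ Vs (i + 1)).card = 1) →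
        (∀ u v : Fin n, u ≠ v → n / 3 - 1 ≤ codeg H u v) ∧
        ¬ ∃ P₁ P₂ : List (Fin n), IsTightPath H P₁ ∧ IsTightPath H P₂ ∧
            Disjoint P₁.toFinset P₂.toFinset ∧
            P₁.toFinset ∪ P₂.toFinset = Finset.univ := by
  refine ⟨9, fun n hn _ Vs hdisj hcov hcard H hH => ?_⟩
  obtain ⟨c, hc⟩ := exists_coloring_of_partition hdisj hcov
  have hinter : ∀ e j, e ∩ Vs j = e.filter (c · = j) := fun e j => by ext; simp [hc]
  simp only [hinter] at hH
  subst hH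
  have hsize : ∀ j, (univ.filter (c · = j)).card = n / 3 := fun j => by
    rw [← hcard j, ← univ_inter (Vs j), hinter]
  exact ⟨fun u v huv => le_codeg_cyclicGraph hsize huv,
    not_exists_tightPaths_cover (by omega) hsize⟩
end

section
/- There exists n₀ ∈ ℕ such that the following holds for all n ≥ n₀. Let V = X ∪ Y be a partition with |X| = ⌊n/2⌋ and |Y| = ⌈n/2⌉, and let H₀ be the 3-graph on V whose edges are all 3-element subsets of V except those containing exactly one vertex of X (and two vertices of Y). Then δ₂(H₀) = ⌈n/2⌉ − 2 and H₀ contains no tight Hamilton path. -/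
open Finset

variable {V : Type*} [DecidableEq V] [Fintype V]

/-!
Any three consecutive vertices of a tight path in `spaceBarrier X` contain zero, two or three
vertices of `X`. Hence two vertices outside `X` at distance one or two along the path propagate
in both directions and force the whole path outside `X`. A Hamilton path meets `X`, so its
vertices outside `X` are pairwise at distance at least three: there are at most `⌈n/3⌉` of them,
fewer than `|Y| = ⌈n/2⌉`. The codegree of `u v` counts the `w` for which `{u, v, w}` meets `X`
in zero or at least two vertices, and is smallest, `|Y| - 2`, when `u, v ∈ Y`.
-/

section Spacing

variable {p : ℕ → Prop} {n : ℕ}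

theorem forall_lt_of_adjacent (h01 : ∀ i, i + 2 < n → p i → p (i + 1) → p (i + 2))
    (h12 : ∀ i, i + 2 < n → p (i + 1) → p (i + 2) → p i) {i : ℕ} (hi : i + 1 < n)
    (h0 : p i) (h1 : p (i + 1)) : ∀ j < n, p j := by
  have up : ∀ j, i ≤ j → j + 1 < n → p j ∧ p (j + 1) := by
    intro j hij
    induction j, hij using Nat.le_induction with
    | base => exact fun _ => ⟨h0, h1⟩
    | succ j _ ih =>
      intro hj
      obtain ⟨hj0, hj1⟩ := ih (by omega)
      exact ⟨hj1, h01 j hj hj0 hj1⟩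
  have down : ∀ j ≤ i, p j ∧ p (j + 1) := by
    intro j hj
    induction hj using Nat.decreasingInduction with
    | self => exact ⟨h0, h1⟩
    | of_succ j _ ih => exact ⟨h12 j (by omega) ih.1 ih.2, ih.1⟩
  intro j hj
  rcases le_or_gt j i with hji | hij
  · exact (down j hji).1
  · obtain ⟨k, rfl⟩ : ∃ k, j = k + 1 := ⟨j - 1, by omega⟩
    exact (up k (by omega) hj).2

theorem add_three_le_of_two_imply_third (h01 : ∀ i, i + 2 < n → p i → p (i + 1) → p (i + 2))
    (h12 : ∀ i, i + 2 < n → p (i + 1) → p (i + 2) → p i)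
    (h02 : ∀ i, i + 2 < n → p i → p (i + 2) → p (i + 1)) (hne : ∃ k < n, ¬ p k)
    {i j : ℕ} (hij : i < j) (hjn : j < n) (hi : p i) (hj : p j) : i + 3 ≤ j := by
  obtain ⟨k, hk, hpk⟩ := hne
  by_contra! hji
  obtain rfl | rfl : j = i + 1 ∨ j = i + 2 := by omega
  · exact hpk (forall_lt_of_adjacent h01 h12 hjn hi hj k hk)
  · exact hpk (forall_lt_of_adjacent h01 h12 (by omega) hi (h02 i hjn hi hj) k hk)

end Spacing

theorem Finset.card_le_of_add_three_le {n : ℕ} {s : Finset ℕ} (hs : ∀ i ∈ s, i < n)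
    (hsep : ∀ i ∈ s, ∀ j ∈ s, i < j → i + 3 ≤ j) : s.card ≤ (n + 2) / 3 := by
  calc s.card ≤ (range ((n + 2) / 3)).card := by
        refine card_le_card_of_injOn (· / 3) (fun i hi => ?_) (fun i hi j hj hij => ?_)
        · have := hs i hi
          simp only [coe_range, Set.mem_Iio]
          omega
        · have := hsep i hi j hj
          have := hsep j hj i hi
          simp only at hij
          omega
    _ = (n + 2) / 3 := card_range _

/-- The 3-graph `H₀` of the statement, with `Y = Xᶜ`. -/
def spaceBarrier (X : Finset V) : Finset (Finset V) :=
  univ.filter fun e => e.card = 3 ∧ (e ∩ X).card ≠ 1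

section SpaceBarrier

variable {X : Finset V} {u v : V}

theorem notMem_of_triple_mem_spaceBarrier {a b c : V} (he : {a, b, c} ∈ spaceBarrier X)
    (ha : a ∉ X) (hb : b ∉ X) : c ∉ X := by
  intro hc
  have : ({a, b, c} : Finset V) ∩ X = {c} := by
    simp [insert_inter_of_notMem, ha, hb, hc]
  simp [spaceBarrier, this] at he

theorem codeg_spaceBarrier (huv : u ≠ v) :
    codeg (spaceBarrier X) u v =
      (((univ.erase u).erase v).filter fun w => ({u, v, w} ∩ X).card ≠ 1).card := by
  rw [codeg, spaceBarrier, filter_filter]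
  symm
  refine card_nbij (fun w => {u, v, w}) (fun w hw => ?_) (fun a ha b hb hab => ?_) ?_
  · simp only [coe_filter, mem_erase, mem_univ, and_true, true_and, Set.mem_ofPred_eq] at hw ⊢
    exact ⟨⟨card_eq_three.2 ⟨u, v, w, huv, Ne.symm hw.1.2, Ne.symm hw.1.1, rfl⟩, hw.2⟩,
      by simp, by simp⟩
  · simp only [coe_filter, mem_erase, mem_univ, and_true, Set.mem_ofPred_eq] at ha
    have hab : ({u, v, a} : Finset V) = {u, v, b} := hab
    have : a ∈ ({u, v, b} : Finset V) := hab ▸ by simp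
    simp only [mem_insert, mem_singleton] at this
    tauto
  · intro e he
    simp only [coe_filter, mem_univ, true_and, Set.mem_ofPred_eq] at he
    obtain ⟨⟨he3, heX⟩, hu, hv⟩ := he
    have hv' : v ∈ e.erase u := mem_erase.2 ⟨Ne.symm huv, hv⟩
    obtain ⟨w, hw⟩ := card_eq_one.1 (by
      rw [card_erase_of_mem hv', card_erase_of_mem hu, he3] : ((e.erase u).erase v).card = 1)
    have hwe : e = {u, v, w} := by
      rw [← insert_erase hu, ← insert_erase hv', hw]
    have hw' : w ∈ (e.erase u).erase v := by simp [hw]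
    simp only [mem_erase] at hw'
    refine ⟨w, ?_, hwe.symm⟩
    simp only [coe_filter, mem_erase, mem_univ, and_true, Set.mem_ofPred_eq]
    exact ⟨⟨hw'.1, hw'.2.1⟩, hwe ▸ heX⟩

theorem codeg_spaceBarrier_of_mem_of_mem (hu : u ∈ X) (hv : v ∈ X) (huv : u ≠ v) :
    codeg (spaceBarrier X) u v = Fintype.card V - 2 := by
  rw [codeg_spaceBarrier huv, filter_true_of_mem, card_erase_of_mem (by simp [Ne.symm huv]),
    card_erase_of_mem (mem_univ u), card_univ, Nat.sub_sub]
  intro w _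
  exact (one_lt_card.2 ⟨u, by simp [hu], v, by simp [hv], huv⟩).ne'

theorem codeg_spaceBarrier_of_mem_of_notMem (hu : u ∈ X) (hv : v ∉ X) :
    codeg (spaceBarrier X) u v = X.card - 1 := by
  have huv : u ≠ v := ne_of_mem_of_not_mem hu hv
  rw [codeg_spaceBarrier huv, ← card_erase_of_mem hu]
  congr 1
  ext w
  by_cases hw : w ∈ X
  · have hwv : w ≠ v := ne_of_mem_of_not_mem hw hv
    simp only [mem_filter, mem_erase, mem_univ, and_true, insert_inter_of_mem hu,
      insert_inter_of_notMem hv, singleton_inter_of_mem hw]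
    exact ⟨fun h => ⟨h.1.2, hw⟩, fun h => ⟨⟨hwv, h.1⟩, by simp [card_pair (Ne.symm h.1)]⟩⟩
  · simp [insert_inter_of_mem, insert_inter_of_notMem, hu, hv, hw]

theorem codeg_spaceBarrier_of_notMem_of_notMem (hu : u ∉ X) (hv : v ∉ X) (huv : u ≠ v) :
    codeg (spaceBarrier X) u v = Xᶜ.card - 2 := by
  rw [codeg_spaceBarrier huv, show 2 = 1 + 1 from rfl, ← Nat.sub_sub,
    ← card_erase_of_mem (mem_compl.2 hu),
    ← card_erase_of_mem (mem_erase.2 ⟨Ne.symm huv, mem_compl.2 hv⟩)]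
  congr 1
  ext w
  by_cases hw : w ∈ X <;> simp [insert_inter_of_notMem, hu, hv, hw]

theorem card_compl_sub_two_le_codeg_spaceBarrier (hX : Xᶜ.card ≤ X.card + 1) (huv : u ≠ v) :
    Xᶜ.card - 2 ≤ codeg (spaceBarrier X) u v := by
  have hcomm : codeg (spaceBarrier X) u v = codeg (spaceBarrier X) v u := by
    simp only [codeg, and_comm]
  by_cases hu : u ∈ X <;> by_cases hv : v ∈ X
  · rw [codeg_spaceBarrier_of_mem_of_mem hu hv huv]
    have := card_le_univ Xᶜ
    omega
  · rw [codeg_spaceBarrier_of_mem_of_notMem hu hv]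
    omega
  · rw [hcomm, codeg_spaceBarrier_of_mem_of_notMem hv hu]
    omega
  · rw [codeg_spaceBarrier_of_notMem_of_notMem hu hv huv]

theorem IsTightPath.card_filter_notMem_le {l : List V} (hl : IsTightPath (spaceBarrier X) l)
    (hX : ∃ x ∈ l, x ∈ X) : (l.toFinset.filter (· ∉ X)).card ≤ (l.length + 2) / 3 := by
  obtain ⟨-, hedge⟩ := hl
  let p : ℕ → Prop := fun i => ∃ h : i < l.length, l[i] ∉ X
  have h01 : ∀ i, i + 2 < l.length → p i → p (i + 1) → p (i + 2) :=
    fun i h ⟨_, h0⟩ ⟨_, h1⟩ => ⟨h, notMem_of_triple_mem_spaceBarrier (hedge i h) h0 h1⟩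
  have h12 : ∀ i, i + 2 < l.length → p (i + 1) → p (i + 2) → p i := by
    refine fun i h ⟨_, h1⟩ ⟨_, h2⟩ => ⟨by omega, notMem_of_triple_mem_spaceBarrier ?_ h1 h2⟩
    convert hedge i h using 1
    ext
    simp only [mem_insert, mem_singleton]
    tauto
  have h02 : ∀ i, i + 2 < l.length → p i → p (i + 2) → p (i + 1) := by
    refine fun i h ⟨_, h0⟩ ⟨_, h2⟩ => ⟨by omega, notMem_of_triple_mem_spaceBarrier ?_ h0 h2⟩
    rw [pair_comm]
    exact hedge i h
  have hne : ∃ k < l.length, ¬ p k := by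
    obtain ⟨x, hxl, hxX⟩ := hX
    obtain ⟨k, hk, rfl⟩ := List.mem_iff_getElem.1 hxl
    exact ⟨k, hk, fun ⟨_, h⟩ => h hxX⟩
  calc (l.toFinset.filter (· ∉ X)).card ≤ ((range l.length).filter p).card := by
        refine card_le_card_of_injOn l.idxOf (fun y hy => ?_) (fun y hy z _ hyz => ?_)
        · simp only [coe_filter, List.mem_toFinset, Set.mem_ofPred_eq] at hy
          have hidx := List.idxOf_lt_length_iff.2 hy.1
          simp only [coe_filter, mem_range, Set.mem_ofPred_eq]
          exact ⟨hidx, hidx, by rw [List.getElem_idxOf]; exact hy.2⟩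
        · simp only [coe_filter, List.mem_toFinset, Set.mem_ofPred_eq] at hy
          exact (List.idxOf_inj hy.1).1 hyz
    _ ≤ (l.length + 2) / 3 := by
        refine card_le_of_add_three_le (fun i hi => mem_range.1 (mem_filter.1 hi).1)
          fun i hi j hj hij => ?_
        obtain ⟨hjn, hpj⟩ := mem_filter.1 hj
        exact add_three_le_of_two_imply_third h01 h12 h02 hne hij (mem_range.1 hjn)
          (mem_filter.1 hi).2 hpj

end SpaceBarrier

theorem statement10 :
    ∃ n₀ : ℕ, ∀ n : ℕ, n₀ ≤ n →
    ∀ X Y : Finset (Fin n), Disjoint X Y → X ∪ Y = Finset.univ →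
      X.card = n / 2 → Y.card = n - n / 2 →
      ∀ H : Finset (Finset (Fin n)),
        H = Finset.univ.filter (fun e : Finset (Fin n) => e.card = 3 ∧ (e ∩ X).card ≠ 1) →
        (∀ u v : Fin n, u ≠ v → (n + 1) / 2 - 2 ≤ codeg H u v) ∧
        (∃ u v : Fin n, u ≠ v ∧ codeg H u v = (n + 1) / 2 - 2) ∧
        ¬ ∃ l : List (Fin n), IsTightPath H l ∧ l.toFinset = Finset.univ := by
  refine ⟨5, fun n hn X Y hXY hXYu hX hY H hH => ?_⟩
  obtain rfl : H = spaceBarrier X := hH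
  have hYc : Xᶜ = Y := IsCompl.compl_eq ⟨hXY, codisjoint_iff.2 hXYu⟩
  have hYcard : Xᶜ.card = (n + 1) / 2 := by rw [hYc, hY]; omega
  refine ⟨fun u v huv => ?_, ?_, ?_⟩
  · rw [← hYcard]
    exact card_compl_sub_two_le_codeg_spaceBarrier (by omega) huv
  · obtain ⟨u, hu, v, hv, huv⟩ := one_lt_card.1 (by omega : 1 < Xᶜ.card)
    refine ⟨u, v, huv, ?_⟩
    rw [codeg_spaceBarrier_of_notMem_of_notMem (mem_compl.1 hu) (mem_compl.1 hv) huv, hYcard]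
  · rintro ⟨l, hl, hcover⟩
    have hlen : l.length = n := by
      rw [← List.toFinset_card_of_nodup hl.1, hcover, card_univ, Fintype.card_fin]
    have hmem : ∀ x, x ∈ l := fun x => List.mem_toFinset.1 (hcover ▸ mem_univ x)
    obtain ⟨x, hx⟩ : X.Nonempty := card_pos.1 (by omega)
    have hYle : Y.card ≤ (l.toFinset.filter (· ∉ X)).card :=
      card_le_card fun y hy =>
        mem_filter.2 ⟨List.mem_toFinset.2 (hmem y), disjoint_right.1 hXY hy⟩
    have := hl.card_filter_notMem_le ⟨x, hmem x, hx⟩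
    omega
end

section
/- Let 0 < α < 1/3 and let n, t ∈ ℕ. Let H₂ be the n-vertex 3-graph with vertex set X ∪ Y, where |X| = ⌈αn⌉, whose edges are exactly the 3-element subsets of X ∪ Y that intersect X. If H₂ ∗ K_t^{(3)} contains a tight Hamilton cycle, then ⌈αn⌉ + t ≥ ⌊(n+t)/3⌋; in particular t ≥ (n − 3⌈αn⌉ − 2)/2. -/
/-!
Let `S` be the set of vertices of `H₂ ∗ K_t^{(3)}` lying in `X` or among the `t` new ones; every
edge meets `S`. Cutting a tight Hamilton cycle (read as a tight path) into `⌊(n+t)/3⌋` disjoint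
blocks of three consecutive vertices gives that many disjoint edges, hence `⌊(n+t)/3⌋ ≤ |S|`.
-/

open Finset

variable {V : Type*} [DecidableEq V] [Fintype V]

namespace IsTightPath

variable {W : Type*} [DecidableEq W] {H : Finset (Finset W)}

theorem tail {a : W} {l : List W}
    (hl : IsTightPath H (a :: l)) : IsTightPath H l :=
  ⟨hl.1.of_cons, fun i hi => hl.2 (i + 1) (by simp; omega)⟩

theorem length_div_three_le_card_inter {S : Finset W}
    (hS : ∀ e ∈ H, (e ∩ S).Nonempty) :
    ∀ {l : List W}, IsTightPath H l → l.length / 3 ≤ #(S ∩ l.toFinset)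
  | a :: b :: c :: l, hl => by
    obtain ⟨x, hx⟩ := hS _ (hl.2 0 (by simp))
    simp only [List.getElem_cons_zero, List.getElem_cons_succ, mem_inter] at hx
    have hxl : x ∉ l := by
      have hnodup := hl.1
      simp only [List.nodup_cons, List.mem_cons, not_or] at hnodup
      simp only [mem_insert, mem_singleton] at hx
      rcases hx.1 with rfl | rfl | rfl <;> tauto
    have hsub : insert x (S ∩ l.toFinset) ⊆ S ∩ (a :: b :: c :: l).toFinset := by
      intro y hy
      simp only [mem_insert, mem_singleton, mem_inter, List.mem_toFinset, List.mem_cons]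
        at hy hx ⊢
      aesop
    calc (a :: b :: c :: l).length / 3 = l.length / 3 + 1 := by simp; omega
      _ ≤ #(S ∩ l.toFinset) + 1 :=
          Nat.add_le_add_right (length_div_three_le_card_inter hS hl.tail.tail.tail) 1
      _ = #(insert x (S ∩ l.toFinset)) := by
          rw [card_insert_of_notMem (by simp [hxl])]
      _ ≤ #(S ∩ (a :: b :: c :: l).toFinset) := card_le_card hsub
  | [], _ | [_], _ | [_, _], _ => by simp

end IsTightPath

theorem IsTightHamCycle.isTightPath {H : Finset (Finset V)} {l : List V}
    (hl : IsTightHamCycle H l) : IsTightPath H l := by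
  refine ⟨hl.1, fun i hi => ?_⟩
  have h := hl.2.2.2 i (by omega)
  simpa only [Nat.mod_eq_of_lt (by omega : i + 1 < l.length),
    Nat.mod_eq_of_lt (by omega : i + 2 < l.length)] using h

theorem IsTightHamCycle.length_eq {H : Finset (Finset V)} {l : List V}
    (hl : IsTightHamCycle H l) : l.length = Fintype.card V := by
  rw [← List.toFinset_card_of_nodup hl.1, hl.2.1, card_univ]

theorem starK_edge_inter_disjSum_nonempty {H : Finset (Finset V)} {X : Finset V} {t : ℕ}
    (hX : ∀ e ∈ H, (e ∩ X).Nonempty) :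
    ∀ e ∈ starK H t, (e ∩ X.disjSum (univ : Finset (Fin t))).Nonempty := by
  intro e he
  obtain ⟨-, -, ⟨_ | y, hy, hright⟩ | ⟨f, hf, rfl⟩⟩ := mem_filter.1 he
  · simp at hright
  · exact ⟨.inr y, mem_inter.2 ⟨hy, by simp⟩⟩
  · obtain ⟨x, hx⟩ := hX f hf
    rw [mem_inter] at hx
    exact ⟨.inl x, mem_inter.2 ⟨mem_image_of_mem _ hx.1, by simpa using hx.2⟩⟩

theorem statement12_general (α : ℝ) (n t : ℕ)
    (X : Finset (Fin n)) (hX : X.card = ⌈α * n⌉₊)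
    (H : Finset (Finset (Fin n)))
    (hH : H = Finset.univ.filter (fun e : Finset (Fin n) => e.card = 3 ∧ (e ∩ X).Nonempty))
    (hcyc : ∃ l : List (Fin n ⊕ Fin t), IsTightHamCycle (starK H t) l) :
    (n + t) / 3 ≤ ⌈α * n⌉₊ + t ∧ ((n : ℝ) - 3 * ⌈α * n⌉₊ - 2) / 2 ≤ (t : ℝ) := by
  obtain ⟨l, hl⟩ := hcyc
  have hHX : ∀ e ∈ H, (e ∩ X).Nonempty := fun e he => by
    rw [hH] at he
    exact (mem_filter.1 he).2.2
  have hbound : (n + t) / 3 ≤ ⌈α * n⌉₊ + t := by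
    calc (n + t) / 3 = l.length / 3 := by simp [hl.length_eq]
      _ ≤ #(X.disjSum univ ∩ l.toFinset) := hl.isTightPath.length_div_three_le_card_inter
          (starK_edge_inter_disjSum_nonempty hHX)
      _ ≤ #(X.disjSum (univ : Finset (Fin t))) := card_le_card inter_subset_left
      _ = ⌈α * n⌉₊ + t := by simp [hX]
  refine ⟨hbound, ?_⟩
  have hn : n ≤ 3 * ⌈α * n⌉₊ + 2 * t + 2 := by omega
  have hn' : (n : ℝ) ≤ 3 * ⌈α * n⌉₊ + 2 * t + 2 := by exact_mod_cast hn
  linarith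

theorem statement12 (α : ℝ) (hα0 : 0 < α) (hα : α < 1 / 3) (n t : ℕ)
    (X : Finset (Fin n)) (hX : X.card = ⌈α * n⌉₊)
    (H : Finset (Finset (Fin n)))
    (hH : H = Finset.univ.filter (fun e : Finset (Fin n) => e.card = 3 ∧ (e ∩ X).Nonempty))
    (hcyc : ∃ l : List (Fin n ⊕ Fin t), IsTightHamCycle (starK H t) l) :
    (n + t) / 3 ≤ ⌈α * n⌉₊ + t ∧ ((n : ℝ) - 3 * ⌈α * n⌉₊ - 2) / 2 ≤ (t : ℝ) :=
  statement12_general α n t X hX H hH hcyc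
end

section
/- Let n ≥ 6 and 0 < μ, θ < 1. Every n-vertex 3-graph H that is (μ, θ)-dense contains a spanning subgraph H' (on the same vertex set, with edge set a subset of that of H) that is strongly (μ − 8θ^{1/4}, θ + θ^{1/4})-dense. -/
open Finset

variable {V : Type*} [DecidableEq V] [Fintype V]

/-!
Call a pair low if its codegree is below `μ n`, and put `γ = θ ^ (1/4)`. There are at most
`γ⁴ n² / 2` low pairs, so by Markov at most `γ n / 2` vertices are heavy, i.e. lie in at least
`2 γ³ n` low pairs. Delete every edge containing a low pair or a heavy vertex. Then the low pairs
and the at most `γ C(n,2)` pairs through heavy vertices get codegree zero, while any other pair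
`uv` only loses edges `uvw` with `w` heavy or `uw`, `vw` low: at most `γ n / 2 + 4 γ³ n ≤ 8 γ n`.
-/

noncomputable def lowPairs (H : Finset (Finset V)) (μ : ℝ) : Finset (Finset V) :=
  {p | p.card = 2 ∧ (degPair H p : ℝ) < μ * Fintype.card V}

def pairDegree (P : Finset (Finset V)) (v : V) : ℕ :=
  #{q ∈ P | v ∈ q}

def pairsMeeting (B : Finset V) : Finset (Finset V) :=
  {p | p.card = 2 ∧ ¬Disjoint B p}

noncomputable def heavyVertices (P : Finset (Finset V)) (ε : ℝ) : Finset V :=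
  {v | ε ≤ pairDegree P v}

def edgesAvoiding (H P : Finset (Finset V)) (B : Finset V) : Finset (Finset V) :=
  {e ∈ H | (∀ q ∈ P, ¬q ⊆ e) ∧ Disjoint B e}

lemma dense3_iff_card_lowPairs {H : Finset (Finset V)} {μ θ : ℝ} :
    Dense3 H μ θ ↔ (#(lowPairs H μ) : ℝ) ≤ θ * (Fintype.card V).choose 2 := by
  rw [Dense3, lowPairs, ← Set.ncard_coe_finset, coe_filter]
  simp only [mem_univ, true_and]

omit [Fintype V] in
lemma sum_pairDegree_le {P : Finset (Finset V)} (hP : ∀ q ∈ P, q.card = 2) (s : Finset V) :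
    ∑ v ∈ s, pairDegree P v ≤ 2 * #P :=
  calc ∑ v ∈ s, pairDegree P v = ∑ q ∈ P, #(s ∩ q) := by
        simp_rw [pairDegree, ← filter_mem_eq_inter, card_eq_sum_ones, sum_filter]
        exact sum_comm
    _ ≤ ∑ q ∈ P, #q := sum_le_sum fun q _ => card_le_card inter_subset_right
    _ = 2 * #P := by rw [sum_congr rfl hP, sum_const, smul_eq_mul, mul_comm]

lemma card_heavyVertices_mul_le {P : Finset (Finset V)} (hP : ∀ q ∈ P, q.card = 2) (ε : ℝ) :
    #(heavyVertices P ε) * ε ≤ 2 * #P := by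
  have hmarkov := card_nsmul_le_sum (heavyVertices P ε) (fun v => (pairDegree P v : ℝ)) ε
    fun v hv => (mem_filter.mp hv).2
  rw [nsmul_eq_mul] at hmarkov
  exact_mod_cast hmarkov.trans (by exact_mod_cast sum_pairDegree_le hP _)

lemma card_pairsMeeting_le (B : Finset V) : #(pairsMeeting B) ≤ #B * Fintype.card V := by
  calc #(pairsMeeting B)
      ≤ #((B ×ˢ univ).image fun x : V × V => ({x.1, x.2} : Finset V)) := by
        refine card_le_card fun p hp => ?_
        obtain ⟨hp2, hBp⟩ := (mem_filter.mp hp).2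
        obtain ⟨b, hbB, hbp⟩ := not_disjoint_iff.mp hBp
        obtain ⟨x, y, -, rfl⟩ := card_eq_two.mp hp2
        simp only [mem_image, mem_product, mem_univ, and_true, Prod.exists]
        rcases mem_insert.mp hbp with rfl | hb
        · exact ⟨b, y, hbB, rfl⟩
        · exact ⟨y, x, by rwa [← mem_singleton.mp hb], pair_comm _ _⟩
    _ ≤ #B * Fintype.card V := card_image_le.trans (by rw [card_product, card_univ])

lemma degPair_edgesAvoiding_eq_zero (H P : Finset (Finset V)) {B : Finset V} {p : Finset V}
    (hp : p ∈ P ∨ ¬Disjoint B p) : degPair (edgesAvoiding H P B) p = 0 := by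
  rw [degPair, card_eq_zero, filter_eq_empty_iff]
  rintro e he hpe
  obtain ⟨-, hPe, hBe⟩ := mem_filter.mp he
  rcases hp with hpP | hBp
  · exact hPe p hpP hpe
  · exact hBp (hBe.mono_right hpe)

lemma filter_sdiff_filter_edgesAvoiding_subset {H P : Finset (Finset V)} {B p : Finset V}
    (h3 : ∀ e ∈ H, e.card = 3) (hP : ∀ q ∈ P, q.card = 2) (hp : p.card = 2) (hpP : p ∉ P)
    (hBp : Disjoint B p) :
    {e ∈ H | p ⊆ e} \ {e ∈ edgesAvoiding H P B | p ⊆ e} ⊆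
      B.image (insert · p) ∪ p.biUnion fun x => {q ∈ P | x ∈ q}.image (· ∪ p) := by
  intro e he
  obtain ⟨⟨heH, hpe⟩, hkept⟩ := mem_sdiff.mp he |>.imp_left mem_filter.mp
  have hlost : ¬((∀ q ∈ P, ¬q ⊆ e) ∧ Disjoint B e) := fun h =>
    hkept (mem_filter.mpr ⟨mem_filter.mpr ⟨heH, h⟩, hpe⟩)
  simp only [not_and_or, not_forall, not_not, not_disjoint_iff, exists_prop] at hlost
  rcases hlost with ⟨q, hqP, hqe⟩ | ⟨b, hbB, hbe⟩
  · have hq2 := hP q hqP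
    have hinter : #(q ∩ p) ≤ 1 := by
      by_contra! h
      have hq : q ∩ p = q := eq_of_subset_of_card_le inter_subset_left (by omega)
      have hp' : q ∩ p = p := eq_of_subset_of_card_le inter_subset_right (by omega)
      exact hpP (hp'.symm.trans hq ▸ hqP)
    have hunion := card_union_add_card_inter q p
    have hsub := card_le_card (union_subset hqe hpe)
    rw [h3 e heH] at hsub
    obtain ⟨x, hx⟩ : (q ∩ p).Nonempty := card_pos.mp (by omega)
    refine mem_union_right _ (mem_biUnion.mpr ⟨x, (mem_inter.mp hx).2, mem_image.mpr ⟨q, ?_, ?_⟩⟩)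
    · exact mem_filter.mpr ⟨hqP, (mem_inter.mp hx).1⟩
    · exact eq_of_subset_of_card_le (union_subset hqe hpe) (by rw [h3 e heH]; omega)
  · refine mem_union_left _ (mem_image.mpr ⟨b, hbB, ?_⟩)
    exact eq_of_subset_of_card_le (insert_subset hbe hpe)
      (by rw [card_insert_of_notMem (disjoint_left.mp hBp hbB), hp, h3 e heH])

lemma degPair_le_degPair_edgesAvoiding_add {H P : Finset (Finset V)} {B p : Finset V}
    (h3 : ∀ e ∈ H, e.card = 3) (hP : ∀ q ∈ P, q.card = 2) (hp : p.card = 2) (hpP : p ∉ P)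
    (hBp : Disjoint B p) :
    degPair H p ≤ degPair (edgesAvoiding H P B) p + (#B + ∑ x ∈ p, pairDegree P x) := by
  have hkept : {e ∈ edgesAvoiding H P B | p ⊆ e} ⊆ {e ∈ H | p ⊆ e} :=
    filter_subset_filter _ (filter_subset _ _)
  have hlost := card_le_card (filter_sdiff_filter_edgesAvoiding_subset h3 hP hp hpP hBp)
  have hbound : #(B.image (insert · p) ∪ p.biUnion fun x => {q ∈ P | x ∈ q}.image (· ∪ p)) ≤
      #B + ∑ x ∈ p, pairDegree P x :=
    (card_union_le _ _).trans <| add_le_add card_image_le <|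
      card_biUnion_le.trans <| sum_le_sum fun x _ => card_image_le
  rw [degPair, degPair, ← card_sdiff_add_card_eq_card hkept]
  omega

lemma card_heavyVertices_lowPairs_mul_le {H : Finset (Finset V)} {μ γ : ℝ} (hγ : 0 < γ)
    (hdense : Dense3 H μ (γ ^ 4)) :
    #(heavyVertices (lowPairs H μ) (2 * γ ^ 3 * Fintype.card V)) * (Fintype.card V : ℝ) ≤
      γ * (Fintype.card V).choose 2 := by
  have hP : ∀ q ∈ lowPairs H μ, q.card = 2 := fun q hq => (mem_filter.mp hq).2.1
  have hmarkov := card_heavyVertices_mul_le hP (2 * γ ^ 3 * Fintype.card V)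
  have hlow := dense3_iff_card_lowPairs.mp hdense
  have hγ3 : 0 < γ ^ 3 := by positivity
  nlinarith

lemma degPair_edgesAvoiding_ge {H : Finset (Finset V)} {μ γ : ℝ} (hγ0 : 0 < γ) (hγ1 : γ ≤ 1)
    (h3 : ∀ e ∈ H, e.card = 3) (hdense : Dense3 H μ (γ ^ 4)) {p : Finset V} (hp : p.card = 2)
    (hpP : p ∉ lowPairs H μ)
    (hBp : Disjoint (heavyVertices (lowPairs H μ) (2 * γ ^ 3 * Fintype.card V)) p) :
    (μ - 8 * γ) * Fintype.card V ≤
      degPair (edgesAvoiding H (lowPairs H μ)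
        (heavyVertices (lowPairs H μ) (2 * γ ^ 3 * Fintype.card V))) p := by
  set n : ℝ := (Fintype.card V : ℝ)
  set P := lowPairs H μ
  set B := heavyVertices P (2 * γ ^ 3 * n)
  have hP : ∀ q ∈ P, q.card = 2 := fun q hq => (mem_filter.mp hq).2.1
  have hn : 0 < n := Nat.cast_pos.mpr (by have := hp ▸ card_le_univ p; omega)
  have hhigh : μ * n ≤ degPair H p := by
    by_contra! h
    exact hpP (mem_filter.mpr ⟨mem_univ p, hp, h⟩)
  have hlight : ∑ x ∈ p, (pairDegree P x : ℝ) ≤ 2 * (2 * γ ^ 3 * n) := by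
    have := sum_le_card_nsmul p (fun x => (pairDegree P x : ℝ)) (2 * γ ^ 3 * n) fun x hx => by
      by_contra! h
      exact disjoint_right.mp hBp hx (mem_filter.mpr ⟨mem_univ x, h.le⟩)
    rwa [nsmul_eq_mul, hp, Nat.cast_ofNat] at this
  have hB : (#B : ℝ) ≤ γ * n / 2 := by
    have := card_heavyVertices_lowPairs_mul_le hγ0 hdense
    rw [Nat.cast_choose_two] at this
    nlinarith
  have hlost := degPair_le_degPair_edgesAvoiding_add h3 hP hp hpP hBp
  have hγ3 : γ ^ 3 ≤ γ := pow_le_of_le_one hγ0.le hγ1 three_ne_zero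
  have hlost' : (degPair H p : ℝ) ≤
      degPair (edgesAvoiding H P B) p + (#B + ∑ x ∈ p, (pairDegree P x : ℝ)) := by
    exact_mod_cast hlost
  nlinarith

theorem exists_stronglyDense3_subset_of_dense3 {H : Finset (Finset V)} {μ γ : ℝ} (hγ0 : 0 < γ)
    (hγ1 : γ ≤ 1) (h3 : ∀ e ∈ H, e.card = 3) (hdense : Dense3 H μ (γ ^ 4)) :
    ∃ H' ⊆ H, StronglyDense3 H' (μ - 8 * γ) (γ ^ 4 + γ) := by
  set P := lowPairs H μ
  set B := heavyVertices P (2 * γ ^ 3 * Fintype.card V)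
  have hgood := fun (p : Finset V) (hp : p.card = 2) =>
    degPair_edgesAvoiding_ge hγ0 hγ1 h3 hdense hp
  refine ⟨edgesAvoiding H P B, filter_subset _ _, ?_, fun p hp => ?_⟩
  · have hsub : lowPairs (edgesAvoiding H P B) (μ - 8 * γ) ⊆ P ∪ pairsMeeting B := by
      intro p hp
      obtain ⟨hp2, hlow⟩ := (mem_filter.mp hp).2
      rw [mem_union, or_iff_not_imp_left]
      exact fun hpP =>
        mem_filter.mpr ⟨mem_univ p, hp2, fun hBp => (hgood p hp2 hpP hBp).not_gt hlow⟩
    have hlow := dense3_iff_card_lowPairs.mp hdense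
    have hmeet : (#(pairsMeeting B) : ℝ) ≤ #B * Fintype.card V := by
      exact_mod_cast card_pairsMeeting_le B
    have hB := card_heavyVertices_lowPairs_mul_le hγ0 hdense
    have hcard := card_le_card hsub |>.trans (card_union_le _ _)
    rw [dense3_iff_card_lowPairs]
    calc (#(lowPairs (edgesAvoiding H P B) (μ - 8 * γ)) : ℝ)
        ≤ #P + #(pairsMeeting B) := by exact_mod_cast hcard
      _ ≤ (γ ^ 4 + γ) * (Fintype.card V).choose 2 := by linarith
  · by_cases hpP : p ∈ P
    · exact Or.inl (degPair_edgesAvoiding_eq_zero H P (.inl hpP))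
    by_cases hBp : Disjoint B p
    · exact Or.inr (hgood p hp hpP hBp)
    · exact Or.inl (degPair_edgesAvoiding_eq_zero H P (.inr hBp))

theorem statement14_general (n : ℕ) (μ θ : ℝ) (hθ0 : 0 < θ) (hθ1 : θ < 1)
    (H : Finset (Finset (Fin n))) (h3 : ∀ e ∈ H, e.card = 3)
    (hdense : Dense3 H μ θ) :
    ∃ H' ⊆ H, StronglyDense3 H' (μ - 8 * θ ^ ((1 : ℝ) / 4)) (θ + θ ^ ((1 : ℝ) / 4)) := by
  have hγ4 : (θ ^ ((1 : ℝ) / 4)) ^ 4 = θ := by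
    rw [one_div, ← Nat.cast_ofNat, Real.rpow_inv_natCast_pow hθ0.le four_ne_zero]
  have h := exists_stronglyDense3_subset_of_dense3 (Real.rpow_pos_of_pos hθ0 _)
    (Real.rpow_le_one hθ0.le hθ1.le (by norm_num)) h3 (hγ4.symm ▸ hdense)
  rwa [hγ4] at h

theorem statement14 (n : ℕ) (hn : 6 ≤ n) (μ θ : ℝ) (hμ0 : 0 < μ) (hμ1 : μ < 1)
    (hθ0 : 0 < θ) (hθ1 : θ < 1)
    (H : Finset (Finset (Fin n))) (h3 : ∀ e ∈ H, e.card = 3)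
    (hdense : Dense3 H μ θ) :
    ∃ H' ⊆ H, StronglyDense3 H' (μ - 8 * θ ^ ((1 : ℝ) / 4)) (θ + θ ^ ((1 : ℝ) / 4)) :=
  statement14_general n μ θ hθ0 hθ1 H h3 hdense
end

section
/- For every γ > 0 there exist η > 0 and n₀ ∈ ℕ such that the following holds for all n ≥ n₀: if H is an n-vertex 3-graph and u, v are distinct vertices of H such that |N_H(u) ∩ N_H(v)| ≥ γn², then u and v are (η,1)-reachable in H. -/
open Finset

variable {V : Type*} [DecidableEq V] [Fintype V]

/-!
For the common link graph `G` of `u` and `v` (pairs `xy` with `uxy, vxy ∈ H`), every path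
`a b c e` of `G` yields tight paths `a b u c e` and `a b v c e` with the same ends, so
`{a, b, c, e}` witnesses reachability. A graph with `γ n²` ordered adjacent pairs has at least
`γ³ n⁴ / 128` paths of length three once `γ n ≥ 24`: discarding the pairs meeting a vertex of
degree `< t = ⌊γ n / 4⌋` loses at most `γ n² / 2` of them, and every remaining middle edge `bc`
extends to at least `(t - 1)(t - 2)` paths. Each 4-set comes from at most `4⁴` quadruples.
-/

namespace SimpleGraph

variable (G : SimpleGraph V) [DecidableRel G.Adj]

def adjPairs : Finset (V × V) := {p | G.Adj p.1 p.2}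

def threePaths : Finset (V × V × V × V) :=
  {q | G.Adj q.1 q.2.1 ∧ G.Adj q.2.1 q.2.2.1 ∧ G.Adj q.2.2.1 q.2.2.2 ∧
    q.1 ≠ q.2.2.1 ∧ q.1 ≠ q.2.2.2 ∧ q.2.1 ≠ q.2.2.2}

theorem card_adjPairs_filter_degree_fst_lt_le (t : ℕ) :
    #{p ∈ G.adjPairs | G.degree p.1 < t} ≤ Fintype.card V * t :=
  calc #{p ∈ G.adjPairs | G.degree p.1 < t}
      ≤ #(({x | G.degree x < t} : Finset V).biUnion fun x => {x} ×ˢ G.neighborFinset x) := by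
        refine card_le_card fun p hp => ?_
        simp only [adjPairs, mem_filter, mem_univ, true_and] at hp
        simp only [mem_biUnion, mem_filter, mem_univ, true_and, mem_product, mem_singleton,
          mem_neighborFinset]
        exact ⟨p.1, hp.2, rfl, hp.1⟩
    _ ≤ ∑ x ∈ ({x | G.degree x < t} : Finset V), #({x} ×ˢ G.neighborFinset x) := card_biUnion_le
    _ ≤ ∑ _x ∈ ({x | G.degree x < t} : Finset V), t := by
        refine sum_le_sum fun x hx => ?_
        rw [mem_filter] at hx
        rw [card_product, card_singleton, one_mul, card_neighborFinset_eq_degree]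
        exact hx.2.le
    _ ≤ Fintype.card V * t := by
        rw [sum_const, smul_eq_mul]
        exact Nat.mul_le_mul_right _ (card_le_univ _)

theorem card_adjPairs_filter_degree_snd_lt_le (t : ℕ) :
    #{p ∈ G.adjPairs | G.degree p.2 < t} ≤ Fintype.card V * t := by
  refine le_of_eq_of_le (card_nbij' Prod.swap Prod.swap ?_ ?_ ?_ ?_)
    (G.card_adjPairs_filter_degree_fst_lt_le t) <;>
  intro p <;> simp [adjPairs, G.adj_comm]

theorem card_adjPairs_le_card_filter_add (t : ℕ) :
    #G.adjPairs ≤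
      #{p ∈ G.adjPairs | t ≤ G.degree p.1 ∧ t ≤ G.degree p.2} + 2 * Fintype.card V * t := by
  have hcover : G.adjPairs ⊆ {p ∈ G.adjPairs | t ≤ G.degree p.1 ∧ t ≤ G.degree p.2} ∪
      {p ∈ G.adjPairs | G.degree p.1 < t} ∪ {p ∈ G.adjPairs | G.degree p.2 < t} := by
    intro p hp
    simp only [mem_union, mem_filter]
    rcases Nat.lt_or_ge (G.degree p.1) t with h₁ | h₁ <;>
      rcases Nat.lt_or_ge (G.degree p.2) t with h₂ | h₂ <;> simp [hp, h₁, h₂]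
  have := (card_le_card hcover).trans ((card_union_le _ _).trans
    (Nat.add_le_add_right (card_union_le _ _) _))
  linarith [G.card_adjPairs_filter_degree_fst_lt_le t, G.card_adjPairs_filter_degree_snd_lt_le t]

theorem card_threePaths_filter_mid_ge {b c : V} (hbc : G.Adj b c) {t : ℕ}
    (hb : t ≤ G.degree b) (hc : t ≤ G.degree c) :
    (t - 1) * (t - 2) ≤ #{q ∈ G.threePaths | (q.2.1, q.2.2.1) = (b, c)} := by
  have hA := pred_card_le_card_erase (s := G.neighborFinset b) (a := c)
  have hB := pred_card_le_card_erase (s := G.neighborFinset c) (a := b)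
  rw [card_neighborFinset_eq_degree] at hA hB
  set A := (G.neighborFinset b).erase c
  set B := (G.neighborFinset c).erase b
  have hdiag : #{q ∈ A ×ˢ B | q.1 = q.2} ≤ #A :=
    card_le_card_of_injOn Prod.fst (fun q hq => (mem_product.mp (mem_filter.mp hq).1).1)
      fun q₁ hq₁ q₂ hq₂ h => Prod.ext h <| by
        rw [← (mem_filter.mp hq₁).2, ← (mem_filter.mp hq₂).2, h]
  have hoff : #A * (#B - 1) ≤ #{q ∈ A ×ˢ B | q.1 ≠ q.2} := by
    have := card_filter_add_card_filter_not (s := A ×ˢ B) (fun q => q.1 = q.2)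
    simp only [card_product, ← ne_eq] at this
    rw [Nat.mul_sub_one, tsub_le_iff_right]
    linarith
  calc (t - 1) * (t - 2) ≤ #A * (#B - 1) := Nat.mul_le_mul (by omega) (by omega)
    _ ≤ #{q ∈ A ×ˢ B | q.1 ≠ q.2} := hoff
    _ ≤ #{q ∈ G.threePaths | (q.2.1, q.2.2.1) = (b, c)} := by
        refine card_le_card_of_injOn (fun q => (q.1, b, c, q.2)) (fun q hq => ?_)
          fun q₁ _ q₂ _ h => by simp_all [Prod.ext_iff]
        simp only [A, B, mem_coe, mem_filter, mem_product, mem_erase, mem_neighborFinset] at hq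
        rw [mem_coe, mem_filter]
        refine ⟨?_, rfl⟩
        simp only [threePaths, mem_filter, mem_univ, true_and]
        exact ⟨hq.1.1.2.symm, hbc, hq.1.2.2, hq.1.1.1, hq.2, hq.1.2.1.symm⟩

theorem card_threePaths_ge (t : ℕ) :
    (#G.adjPairs - 2 * Fintype.card V * t) * ((t - 1) * (t - 2)) ≤ #G.threePaths := by
  set good := {p ∈ G.adjPairs | t ≤ G.degree p.1 ∧ t ≤ G.degree p.2}
  calc (#G.adjPairs - 2 * Fintype.card V * t) * ((t - 1) * (t - 2))
      ≤ #good * ((t - 1) * (t - 2)) :=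
        Nat.mul_le_mul_right _ (Nat.sub_le_of_le_add (G.card_adjPairs_le_card_filter_add t))
    _ ≤ ∑ p ∈ good, #{q ∈ G.threePaths | (q.2.1, q.2.2.1) = p} := by
        rw [← smul_eq_mul]
        refine card_nsmul_le_sum _ _ _ fun p hp => ?_
        simp only [good, adjPairs, mem_filter, mem_univ, true_and] at hp
        exact G.card_threePaths_filter_mid_ge hp.1 hp.2.1 hp.2.2
    _ = #{q ∈ G.threePaths | (q.2.1, q.2.2.1) ∈ good} := sum_card_fiberwise_eq_card_filter _ _ _
    _ ≤ #G.threePaths := card_filter_le _ _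

theorem le_card_threePaths {γ : ℝ} (hn : 24 ≤ γ * Fintype.card V)
    (hG : γ * Fintype.card V ^ 2 ≤ #G.adjPairs) :
    γ ^ 3 * Fintype.card V ^ 4 / 128 ≤ #G.threePaths := by
  set n : ℝ := (Fintype.card V : ℝ)
  set t := ⌊γ * n / 4⌋₊
  have ht_le : (t : ℝ) ≤ γ * n / 4 := Nat.floor_le (by linarith)
  have ht_gt : γ * n / 4 - 1 < t := by linarith [Nat.lt_floor_add_one (γ * n / 4)]
  have ht : 2 ≤ t := by exact_mod_cast (show (2 : ℝ) ≤ t by linarith)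
  have hlow : ((2 * Fintype.card V * t : ℕ) : ℝ) ≤ γ * n ^ 2 / 2 := by
    push_cast
    nlinarith
  have hgood : γ * n ^ 2 / 2 ≤ ((#G.adjPairs - 2 * Fintype.card V * t : ℕ) : ℝ) := by
    have hle : ((2 * Fintype.card V * t : ℕ) : ℝ) ≤ #G.adjPairs := by nlinarith
    rw [Nat.cast_sub (by exact_mod_cast hle)]
    linarith
  have hext : (γ * n / 8) ^ 2 ≤ (((t - 1) * (t - 2) : ℕ) : ℝ) := by
    push_cast [Nat.cast_sub (by omega : 1 ≤ t), Nat.cast_sub ht]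
    nlinarith
  calc γ ^ 3 * n ^ 4 / 128 = γ * n ^ 2 / 2 * (γ * n / 8) ^ 2 := by ring
    _ ≤ ((#G.adjPairs - 2 * Fintype.card V * t : ℕ) : ℝ) * (((t - 1) * (t - 2) : ℕ) : ℝ) :=
        mul_le_mul hgood hext (by positivity) (by positivity)
    _ ≤ #G.threePaths := by exact_mod_cast G.card_threePaths_ge t

end SimpleGraph

def reachWitnesses (H : Finset (Finset V)) (i : ℕ) (u v : V) : Set (Finset V) :=
  {T : Finset V | T.card = 5 * i - 1 ∧
      ∃ Ps Qs : List (List V), Ps.length = i ∧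
        (∀ P ∈ Ps, IsTightPath H P ∧ P.length = 5) ∧
        (∀ Q ∈ Qs, IsTightPath H Q ∧ Q.length = 5) ∧
        Ps.Pairwise (fun P P' => Disjoint P.toFinset P'.toFinset) ∧
        Qs.Pairwise (fun Q Q' => Disjoint Q.toFinset Q'.toFinset) ∧
        famVerts Ps = insert u T ∧ famVerts Qs = insert v T ∧
        SameEndsList Ps Qs}

theorem reachable_iff_le_ncard_reachWitnesses (H : Finset (Finset V)) (β : ℝ) (i : ℕ) (u v : V) :
    Reachable H β i u v ↔
      β * (Fintype.card V : ℝ) ^ (5 * i - 1) ≤ (reachWitnesses H i u v).ncard :=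
  Iff.rfl

section

variable {α : Type*} [DecidableEq α] {H : Finset (Finset α)}

theorem card_le_mul_card_image_toFinset (s : Finset (α × α × α × α)) :
    #s ≤ 256 * #(s.image fun q => ({q.1, q.2.1, q.2.2.1, q.2.2.2} : Finset α)) := by
  refine card_le_mul_card_image _ _ fun T hT => ?_
  obtain ⟨q, -, rfl⟩ := mem_image.mp hT
  set T : Finset α := {q.1, q.2.1, q.2.2.1, q.2.2.2}
  have hT4 : #T ≤ 4 := card_le_four
  calc #{q' ∈ s | ({q'.1, q'.2.1, q'.2.2.1, q'.2.2.2} : Finset α) = T}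
      ≤ #(T ×ˢ T ×ˢ T ×ˢ T) := card_le_card fun q' hq' => by
        rw [mem_filter] at hq'
        simp only [mem_product, ← hq'.2, mem_insert, mem_singleton, true_or, or_true, and_self]
    _ ≤ 4 * (4 * (4 * 4)) := by
        simp only [card_product]
        exact Nat.mul_le_mul hT4 (Nat.mul_le_mul hT4 (Nat.mul_le_mul hT4 hT4))

theorem ne_of_pair_mem_linkPairs {x a b : α} (h : ({a, b} : Finset α) ∈ linkPairs H x) :
    a ≠ b := by
  rintro rfl
  simp [linkPairs] at h

theorem isTightPath_of_pairs_mem_linkPairs {a b x c e : α}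
    (hab : ({a, b} : Finset α) ∈ linkPairs H x)
    (hbc : ({b, c} : Finset α) ∈ linkPairs H x) (hce : ({c, e} : Finset α) ∈ linkPairs H x)
    (hac : a ≠ c) (hae : a ≠ e) (hbe : b ≠ e) : IsTightPath H [a, b, x, c, e] := by
  have hab' := ne_of_pair_mem_linkPairs hab
  have hbc' := ne_of_pair_mem_linkPairs hbc
  have hce' := ne_of_pair_mem_linkPairs hce
  obtain ⟨hxa, hxb⟩ : x ≠ a ∧ x ≠ b := by simpa [not_or] using hab.2.1
  obtain ⟨hxc, hxe⟩ : x ≠ c ∧ x ≠ e := by simpa [not_or] using hce.2.1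
  refine ⟨by simp [hab', hac, hae, hbc', hbe, hce', hxa.symm, hxb.symm, hxc, hxe], fun i hi => ?_⟩
  have : i < 3 := by simp at hi; omega
  interval_cases i
  · rw [List.getElem_cons_zero, pair_comm, insert_comm]
    exact hab.2.2
  · exact insert_comm b x {c} ▸ hbc.2.2
  · exact hce.2.2

theorem mem_reachWitnesses_one {u v : α} {P Q : List α} {T : Finset α}
    (hT : #T = 4) (hP : IsTightPath H P) (hQ : IsTightPath H Q) (hPlen : P.length = 5)
    (hQlen : Q.length = 5) (hPT : P.toFinset = insert u T) (hQT : Q.toFinset = insert v T)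
    (hfirst : firstEnd P = firstEnd Q) (hlast : lastEnd P = lastEnd Q) :
    T ∈ reachWitnesses H 1 u v := by
  refine ⟨hT, [P], [Q], rfl, by simpa using ⟨hP, hPlen⟩, by simpa using ⟨hQ, hQlen⟩,
    List.pairwise_singleton _ _, List.pairwise_singleton _ _, by simpa [famVerts] using hPT,
    by simpa [famVerts] using hQT, rfl, fun j hj => ?_⟩
  obtain rfl : j = 0 := by simpa using hj
  exact ⟨hfirst, hlast⟩

end

def commonLinkGraph (H : Finset (Finset V)) (u v : V) : SimpleGraph V where
  Adj x y := ({x, y} : Finset V) ∈ linkPairs H u ∩ linkPairs H v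
  symm := ⟨fun x y h => by rwa [pair_comm]⟩
  loopless := ⟨fun x h => by simp [linkPairs] at h⟩

instance (H : Finset (Finset V)) (u v : V) : DecidableRel (commonLinkGraph H u v).Adj :=
  fun x y => inferInstanceAs <| Decidable <|
    (#{x, y} = 2 ∧ u ∉ ({x, y} : Finset V) ∧ insert u {x, y} ∈ H) ∧
      (#{x, y} = 2 ∧ v ∉ ({x, y} : Finset V) ∧ insert v {x, y} ∈ H)

theorem ncard_linkPairs_inter_le_card_adjPairs (H : Finset (Finset V)) (u v : V) :
    (linkPairs H u ∩ linkPairs H v).ncard ≤ #(commonLinkGraph H u v).adjPairs := by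
  calc (linkPairs H u ∩ linkPairs H v).ncard
      ≤ (↑((commonLinkGraph H u v).adjPairs.image fun p => ({p.1, p.2} : Finset V)) :
          Set (Finset V)).ncard := by
        refine Set.ncard_le_ncard (fun p hp => ?_) (finite_toSet _)
        obtain ⟨x, y, -, rfl⟩ := card_eq_two.mp hp.1.1
        refine mem_image.mpr ⟨(x, y), ?_, rfl⟩
        simp only [SimpleGraph.adjPairs, mem_filter, mem_univ, true_and]
        exact hp
    _ ≤ #(commonLinkGraph H u v).adjPairs := by
        rw [Set.ncard_coe_finset]
        exact card_image_le

theorem toFinset_mem_reachWitnesses_one {H : Finset (Finset V)} {u v : V}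
    {q : V × V × V × V} (hq : q ∈ (commonLinkGraph H u v).threePaths) :
    {q.1, q.2.1, q.2.2.1, q.2.2.2} ∈ reachWitnesses H 1 u v := by
  obtain ⟨a, b, c, e⟩ := q
  simp only [SimpleGraph.threePaths, mem_filter, mem_univ, true_and] at hq
  obtain ⟨⟨hab_u, hab_v⟩, ⟨hbc_u, hbc_v⟩, ⟨hce_u, hce_v⟩, hac, hae, hbe⟩ := hq
  have hab := ne_of_pair_mem_linkPairs hab_u
  have hbc := ne_of_pair_mem_linkPairs hbc_u
  have hce := ne_of_pair_mem_linkPairs hce_u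
  refine mem_reachWitnesses_one (P := [a, b, u, c, e]) (Q := [a, b, v, c, e])
    (by simp [card_insert_of_notMem, *])
    (isTightPath_of_pairs_mem_linkPairs hab_u hbc_u hce_u hac hae hbe)
    (isTightPath_of_pairs_mem_linkPairs hab_v hbc_v hce_v hac hae hbe) rfl rfl ?_ ?_ rfl rfl
  all_goals
    ext
    simp only [List.toFinset_cons, List.toFinset_nil, mem_insert, mem_singleton, notMem_empty,
      or_false]
    tauto

theorem reachable_one_of_le_ncard_linkPairs_inter {H : Finset (Finset V)} {u v : V} {γ : ℝ}
    (hn : 24 ≤ γ * Fintype.card V)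
    (hlink : γ * Fintype.card V ^ 2 ≤ (linkPairs H u ∩ linkPairs H v).ncard) :
    Reachable H (γ ^ 3 / 32768) 1 u v := by
  set G := commonLinkGraph H u v
  have hpaths := G.le_card_threePaths hn
    (hlink.trans (by exact_mod_cast ncard_linkPairs_inter_le_card_adjPairs H u v))
  have himage : (↑(G.threePaths.image fun q => ({q.1, q.2.1, q.2.2.1, q.2.2.2} : Finset V)) :
      Set (Finset V)) ⊆ reachWitnesses H 1 u v := by
    intro T hT
    obtain ⟨q, hq, rfl⟩ := mem_image.mp hT
    exact toFinset_mem_reachWitnesses_one hq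
  have hcount : #G.threePaths ≤ 256 * (reachWitnesses H 1 u v).ncard := by
    refine (card_le_mul_card_image_toFinset _).trans (Nat.mul_le_mul_left _ ?_)
    rw [← Set.ncard_coe_finset]
    exact Set.ncard_le_ncard himage (Set.toFinite _)
  have hcount' : (#G.threePaths : ℝ) ≤ 256 * (reachWitnesses H 1 u v).ncard := by
    exact_mod_cast hcount
  rw [reachable_iff_le_ncard_reachWitnesses]
  calc γ ^ 3 / 32768 * (Fintype.card V : ℝ) ^ (5 * 1 - 1)
      = γ ^ 3 * Fintype.card V ^ 4 / 128 / 256 := by norm_num; ring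
    _ ≤ ((reachWitnesses H 1 u v).ncard : ℝ) := by linarith

theorem statement17 :
    ∀ γ : ℝ, 0 < γ → ∃ η : ℝ, 0 < η ∧ ∃ n₀ : ℕ, ∀ n : ℕ, n₀ ≤ n →
    ∀ H : Finset (Finset (Fin n)), (∀ e ∈ H, e.card = 3) →
    ∀ u v : Fin n, u ≠ v →
      γ * (n : ℝ) ^ 2 ≤ (((linkPairs H u ∩ linkPairs H v).ncard : ℕ) : ℝ) →
      Reachable H η 1 u v := by
  intro γ hγ
  refine ⟨γ ^ 3 / 32768, by positivity, ⌈24 / γ⌉₊, fun n hn H _ u v _ hlink => ?_⟩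
  have hn' : 24 ≤ γ * n := by
    rw [← div_le_iff₀' hγ]
    exact (Nat.le_ceil _).trans (by exact_mod_cast hn)
  exact reachable_one_of_le_ncard_linkPairs_inter (by simpa using hn') (by simpa using hlink)
end

section
/- Let H be an n-vertex 3-graph in which every pair of distinct vertices has codegree either 0 or at least n/3. Then for every vertex v of H, the edges of H containing v lie in at most two tight components of H. -/
open Finset

variable {V : Type*} [DecidableEq V] [Fintype V]

/-!
For an edge `e ∋ v`, let `N(e)` be the set of vertices `x ≠ v` such that `{v, x}` lies in an
edge of the tight component of `e`. Two edges through `v` and `x` share two vertices, so they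
are tightly adjacent: hence edges through `v` in different tight components have disjoint sets
`N(e)`. If `a ∈ e \ {v}`, then `N(e)` contains `a` and the third vertex of every edge through
`v` and `a`, so `|N(e)| ≥ codeg(v, a) + 1 > n / 3`. Three such disjoint sets do not fit into
the `n - 1` vertices other than `v`.
-/

section TightComponents

variable {α : Type*} [DecidableEq α] {H : Finset (Finset α)}

instance : Std.Symm (EdgeAdj H) where
  symm _ _ h := ⟨h.2.1, h.1, by rw [inter_comm]; exact h.2.2⟩

lemma SameTightComponent.symm {e f : Finset α} (h : SameTightComponent H e f) :
    SameTightComponent H f e :=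
  ⟨h.2.1, h.1, Std.Symm.symm _ _ h.2.2⟩

lemma SameTightComponent.trans {e f g : Finset α} (h₁ : SameTightComponent H e f)
    (h₂ : SameTightComponent H f g) : SameTightComponent H e g :=
  ⟨h₁.1, h₂.2.1, h₁.2.2.trans h₂.2.2⟩

lemma sameTightComponent_of_mem_of_mem (h3 : ∀ e ∈ H, e.card = 3) {e f : Finset α} {u v : α}
    (he : e ∈ H) (hf : f ∈ H) (huv : u ≠ v) (hue : u ∈ e) (hve : v ∈ e) (huf : u ∈ f)
    (hvf : v ∈ f) : SameTightComponent H e f := by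
  refine ⟨he, hf, ?_⟩
  obtain rfl | hne := eq_or_ne e f
  · exact .refl
  refine .single ⟨he, hf, le_antisymm ?_ ?_⟩
  · have hlt : (e ∩ f).card < e.card :=
      card_lt_card (ssubset_of_subset_of_ne inter_subset_left fun h ↦ hne <|
        eq_of_subset_of_card_le (h ▸ inter_subset_right) (by rw [h3 e he, h3 f hf]))
    rw [h3 e he] at hlt
    omega
  · calc 2 = ({u, v} : Finset α).card := (card_pair huv).symm
      _ ≤ (e ∩ f).card := card_le_card (by simp [insert_subset_iff, hue, hve, huf, hvf])

lemma exists_eq_triple_of_card_eq_three {e : Finset α} (he : e.card = 3) {u v : α}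
    (huv : u ≠ v) (hue : u ∈ e) (hve : v ∈ e) :
    ∃ x, x ≠ u ∧ x ≠ v ∧ e = {u, v, x} := by
  have hv : v ∈ e.erase u := mem_erase.2 ⟨huv.symm, hve⟩
  obtain ⟨x, hx⟩ : ∃ x, (e.erase u).erase v = {x} := by
    rw [← card_eq_one, card_erase_of_mem hv, card_erase_of_mem hue, he]
  have hx' : x ∈ (e.erase u).erase v := hx ▸ mem_singleton_self x
  refine ⟨x, (mem_erase.1 (mem_erase.1 hx').2).1, (mem_erase.1 hx').1, ?_⟩
  rw [← hx, insert_erase hv, insert_erase hue]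

end TightComponents

section Link

variable (H : Finset (Finset V))

open Classical in
noncomputable def tightLinkVerts (v : V) (e : Finset V) : Finset V :=
  (univ.erase v).filter fun x => ∃ f ∈ H, v ∈ f ∧ x ∈ f ∧ SameTightComponent H e f

variable {H}

lemma mem_tightLinkVerts {v x : V} {e : Finset V} :
    x ∈ tightLinkVerts H v e ↔ x ≠ v ∧ ∃ f ∈ H, v ∈ f ∧ x ∈ f ∧ SameTightComponent H e f := by
  simp [tightLinkVerts]

lemma disjoint_tightLinkVerts (h3 : ∀ e ∈ H, e.card = 3) {v : V} {e f : Finset V}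
    (hef : ¬SameTightComponent H e f) :
    Disjoint (tightLinkVerts H v e) (tightLinkVerts H v f) := by
  simp only [disjoint_left, mem_tightLinkVerts]
  rintro x ⟨hxv, e', he', hve', hxe', hee'⟩ ⟨-, f', hf', hvf', hxf', hff'⟩
  exact hef <| hee'.trans <|
    (sameTightComponent_of_mem_of_mem h3 he' hf' hxv hxe' hve' hxf' hvf').trans hff'.symm

lemma codeg_lt_card_tightLinkVerts (h3 : ∀ e ∈ H, e.card = 3) {v a : V} {e : Finset V}
    (he : e ∈ H) (hva : v ≠ a) (hve : v ∈ e) (hae : a ∈ e) :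
    codeg H v a < (tightLinkVerts H v e).card := by
  have ha : a ∈ tightLinkVerts H v e :=
    mem_tightLinkVerts.2 ⟨hva.symm, e, he, hve, hae, he, he, .refl⟩
  have hcover : H.filter (fun f ↦ v ∈ f ∧ a ∈ f) ⊆
      ((tightLinkVerts H v e).erase a).image fun x ↦ {v, a, x} := by
    intro f hf
    obtain ⟨hfH, hvf, haf⟩ := mem_filter.1 hf
    obtain ⟨x, hxv, hxa, rfl⟩ := exists_eq_triple_of_card_eq_three (h3 f hfH) hva hvf haf
    refine mem_image.2 ⟨x, mem_erase.2 ⟨hxa, mem_tightLinkVerts.2 ⟨hxv, _, hfH, hvf, by simp,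
      sameTightComponent_of_mem_of_mem h3 he hfH hva hve hae hvf haf⟩⟩, rfl⟩
  calc codeg H v a ≤ ((tightLinkVerts H v e).erase a).card :=
        (card_le_card hcover).trans card_image_le
    _ < (tightLinkVerts H v e).card := card_erase_lt_of_mem ha

lemma card_tightLinkVerts_ge (h3 : ∀ e ∈ H, e.card = 3) {δ : ℝ}
    (hdeg : ∀ u v : V, u ≠ v → codeg H u v = 0 ∨ δ ≤ codeg H u v) {v : V} {e : Finset V}
    (he : e ∈ H) (hve : v ∈ e) : δ + 1 ≤ (tightLinkVerts H v e).card := by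
  obtain ⟨a, hav, hae⟩ : ∃ a, a ≠ v ∧ a ∈ e := by
    obtain ⟨a, ha⟩ : (e.erase v).Nonempty := by
      rw [← card_pos, card_erase_of_mem hve, h3 e he]; omega
    exact ⟨a, mem_erase.1 ha⟩
  have hlt := codeg_lt_card_tightLinkVerts h3 he hav.symm hve hae
  have hpos : codeg H v a ≠ 0 :=
    (card_pos.2 ⟨e, mem_filter.2 ⟨he, hve, hae⟩⟩).ne'
  have hδ := (hdeg v a hav.symm).resolve_left hpos
  have : (codeg H v a : ℝ) + 1 ≤ (tightLinkVerts H v e).card := by exact_mod_cast hlt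
  linarith

theorem sameTightComponent_or_of_codeg_ge (h3 : ∀ e ∈ H, e.card = 3)
    (hdeg : ∀ u v : V, u ≠ v → codeg H u v = 0 ∨ (Fintype.card V : ℝ) / 3 ≤ codeg H u v)
    {v : V} {e f g : Finset V} (he : e ∈ H) (hf : f ∈ H) (hg : g ∈ H)
    (hve : v ∈ e) (hvf : v ∈ f) (hvg : v ∈ g) :
    SameTightComponent H e f ∨ SameTightComponent H e g ∨ SameTightComponent H f g := by
  by_contra! ⟨hef, heg, hfg⟩
  have hsub : tightLinkVerts H v e ∪ tightLinkVerts H v f ∪ tightLinkVerts H v g ⊆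
      univ.erase v := by
    simp only [union_subset_iff, tightLinkVerts, filter_subset, and_self]
  have hcard := card_le_card hsub
  rw [card_union_of_disjoint (disjoint_union_left.2 ⟨disjoint_tightLinkVerts h3 heg,
      disjoint_tightLinkVerts h3 hfg⟩), card_union_of_disjoint (disjoint_tightLinkVerts h3 hef),
    card_erase_of_mem (mem_univ v), card_univ] at hcard
  have hcard' : ((tightLinkVerts H v e).card + (tightLinkVerts H v f).card +
      (tightLinkVerts H v g).card : ℝ) ≤ Fintype.card V := by
    exact_mod_cast hcard.trans (Nat.sub_le _ 1)
  linarith [card_tightLinkVerts_ge h3 hdeg he hve, card_tightLinkVerts_ge h3 hdeg hf hvf,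
    card_tightLinkVerts_ge h3 hdeg hg hvg]

end Link

theorem statement18 (n : ℕ) (H : Finset (Finset (Fin n))) (h3 : ∀ e ∈ H, e.card = 3)
    (hdeg : ∀ u v : Fin n, u ≠ v → codeg H u v = 0 ∨ (n : ℝ) / 3 ≤ (codeg H u v : ℝ)) :
    ∀ v : Fin n, ∀ e ∈ H, ∀ f ∈ H, ∀ g ∈ H, v ∈ e → v ∈ f → v ∈ g →
      SameTightComponent H e f ∨ SameTightComponent H e g ∨
        SameTightComponent H f g := by
  intro v e he f hf g hg hve hvf hvg
  exact sameTightComponent_or_of_codeg_ge h3 (by simpa only [Fintype.card_fin] using hdeg)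
    he hf hg hve hvf hvg
end

section
/- There exists β₀ > 0 such that for every 0 < β ≤ β₀ there exists n₀ ∈ ℕ such that the following holds for all n ≥ n₀. Let H be an n-vertex 3-graph and let 𝒮 be a family of 3-element subsets of V(H) such that for every S ∈ 𝒮 there are at least β⁴n³⁴/2 sets of 34 vertices of V(H) \ S, each being the vertex set of a family of pairwise vertex-disjoint tight paths that is an S-absorber in H. Then there exists a family ℱ of pairwise disjoint 34-element subsets of V(H) with |ℱ| ≤ β⁵n/34 such that every member of ℱ is the vertex set of a family of pairwise vertex-disjoint tight paths that is an S-absorber for some S ∈ 𝒮, and for every S ∈ 𝒮 at least β¹⁰n members of ℱ are disjoint from S and are vertex sets of S-absorbers. -/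
open Finset

variable {V : Type*} [DecidableEq V] [Fintype V]

/-!
Choose `m = ⌊β⁵n/34⌋` pairwise disjoint 34-sets one after the other, each uniformly among the
34-sets avoiding the blocks chosen so far. Those blocks cover at most `β⁵n` vertices and so meet
at most `β⁵n · n³³ ≤ β⁴n³⁴/4` of the at least `β⁴n³⁴/2` vertex sets of `S`-absorbers; hence,
whatever happened before, the next block is such a set with probability at least `β⁴/4`. The
number of good blocks therefore has exponential moment `𝔼[(1/2)^good] ≤ (1 - β⁴/8)^m`, which makes
`ℙ[good < β¹⁰n]` smaller than `n⁻³` once `n ≫ β⁻³⁶`, and a union bound over the at most `n³`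
sets `S` leaves a sequence that works for all of them at once.
-/

namespace AbsorberSelection

omit [DecidableEq V] in
lemma card_le_pow_of_forall_card_eq {𝒜 : Finset (Finset V)} {k : ℕ} (h𝒜 : ∀ A ∈ 𝒜, #A = k) :
    #𝒜 ≤ Fintype.card V ^ k :=
  calc #𝒜 ≤ #((univ : Finset V).powersetCard k) :=
        card_le_card fun A hA => mem_powersetCard.2 ⟨subset_univ A, h𝒜 A hA⟩
    _ ≤ Fintype.card V ^ k := by
        rw [card_powersetCard, card_univ]
        exact Nat.choose_le_pow _ _

lemma card_filter_mem_le {𝒜 : Finset (Finset V)} {k : ℕ} (h𝒜 : ∀ A ∈ 𝒜, #A = k) (u : V) :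
    #{A ∈ 𝒜 | u ∈ A} ≤ Fintype.card V ^ (k - 1) := by
  have herase : Set.InjOn (fun A : Finset V => A.erase u) ↑{A ∈ 𝒜 | u ∈ A} := by
    intro A hA B hB hAB
    rw [← insert_erase (mem_filter.1 hA).2, ← insert_erase (mem_filter.1 hB).2]
    exact congrArg (insert u) hAB
  rw [← card_image_of_injOn herase]
  refine card_le_pow_of_forall_card_eq fun B hB => ?_
  obtain ⟨A, hA, rfl⟩ := mem_image.1 hB
  rw [mem_filter] at hA
  rw [card_erase_of_mem hA.2, h𝒜 A hA.1]

def blockUnion (l : List (Finset V)) : Finset V := l.foldr (· ∪ ·) ∅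

omit [Fintype V] in
@[simp] lemma blockUnion_cons (A : Finset V) (l : List (Finset V)) :
    blockUnion (A :: l) = A ∪ blockUnion l := rfl

omit [Fintype V] in
lemma subset_blockUnion {A : Finset V} {l : List (Finset V)} (hA : A ∈ l) :
    A ⊆ blockUnion l := by
  induction l with
  | nil => simp at hA
  | cons B l ih =>
    rcases List.mem_cons.1 hA with rfl | hA
    · exact subset_union_left
    · exact (ih hA).trans subset_union_right

def freshBlocks (k : ℕ) (l : List (Finset V)) : Finset (Finset V) :=
  (univ \ blockUnion l).powersetCard k

lemma mem_freshBlocks {k : ℕ} {A : Finset V} {l : List (Finset V)} :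
    A ∈ freshBlocks k l ↔ #A = k ∧ Disjoint A (blockUnion l) := by
  simp [freshBlocks, mem_powersetCard, subset_sdiff, and_comm]

lemma card_le_card_filter_mem_freshBlocks_add {𝒜 : Finset (Finset V)} {k : ℕ}
    (h𝒜 : ∀ A ∈ 𝒜, #A = k) (l : List (Finset V)) :
    #𝒜 ≤ #{A ∈ freshBlocks k l | A ∈ 𝒜} + #(blockUnion l) * Fintype.card V ^ (k - 1) := by
  have hsub : 𝒜 ⊆ {A ∈ freshBlocks k l | A ∈ 𝒜} ∪
      (blockUnion l).biUnion fun u => {A ∈ 𝒜 | u ∈ A} := by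
    intro A hA
    by_cases hd : Disjoint A (blockUnion l)
    · exact mem_union_left _ (mem_filter.2 ⟨mem_freshBlocks.2 ⟨h𝒜 A hA, hd⟩, hA⟩)
    · obtain ⟨u, huA, hul⟩ := not_disjoint_iff.1 hd
      exact mem_union_right _ (mem_biUnion.2 ⟨u, hul, mem_filter.2 ⟨hA, huA⟩⟩)
  calc #𝒜 ≤ _ := card_le_card hsub
    _ ≤ _ := card_union_le _ _
    _ ≤ _ := by
      gcongr
      exact card_biUnion_le_card_mul _ _ _ fun u _ => card_filter_mem_le h𝒜 u

/-- The sequences `[Aᵢ, …, A₁]` of pairwise disjoint `k`-sets, newest block first. Every sequence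
of length `i` has the same number of extensions, so counting over these lists amounts to choosing
`A₁, A₂, …` one after the other, each uniformly among the `k`-sets avoiding the earlier ones. -/
def disjointBlockLists (V : Type*) [DecidableEq V] [Fintype V] (k : ℕ) :
    ℕ → Finset (List (Finset V))
  | 0 => {[]}
  | i + 1 => (disjointBlockLists V k i).biUnion fun l => (freshBlocks k l).image (· :: l)

section DisjointBlockLists

variable {k i : ℕ} {l : List (Finset V)}

lemma mem_disjointBlockLists_succ {l' : List (Finset V)} :
    l' ∈ disjointBlockLists V k (i + 1) ↔
      ∃ l ∈ disjointBlockLists V k i, ∃ A ∈ freshBlocks k l, A :: l = l' := by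
  simp [disjointBlockLists]

lemma length_of_mem_disjointBlockLists (hl : l ∈ disjointBlockLists V k i) : l.length = i := by
  induction i generalizing l with
  | zero => simp_all [disjointBlockLists]
  | succ i ih =>
    obtain ⟨l, hl', A, -, rfl⟩ := mem_disjointBlockLists_succ.1 hl
    simp [ih hl']

lemma card_of_mem_of_mem_disjointBlockLists (hl : l ∈ disjointBlockLists V k i) {A : Finset V}
    (hA : A ∈ l) : #A = k := by
  induction i generalizing l with
  | zero => simp_all [disjointBlockLists]
  | succ i ih =>
    obtain ⟨l, hl', B, hB, rfl⟩ := mem_disjointBlockLists_succ.1 hl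
    rcases List.mem_cons.1 hA with rfl | hA
    · exact (mem_freshBlocks.1 hB).1
    · exact ih hl' hA

lemma pairwise_disjoint_of_mem_disjointBlockLists (hl : l ∈ disjointBlockLists V k i) :
    l.Pairwise Disjoint := by
  induction i generalizing l with
  | zero => simp_all [disjointBlockLists]
  | succ i ih =>
    obtain ⟨l, hl', A, hA, rfl⟩ := mem_disjointBlockLists_succ.1 hl
    exact List.Pairwise.cons
      (fun B hB => (mem_freshBlocks.1 hA).2.mono_right (subset_blockUnion hB)) (ih hl')

lemma card_blockUnion_of_mem_disjointBlockLists (hl : l ∈ disjointBlockLists V k i) :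
    #(blockUnion l) = k * i := by
  induction i generalizing l with
  | zero => simp_all [disjointBlockLists, blockUnion]
  | succ i ih =>
    obtain ⟨l, hl', A, hA, rfl⟩ := mem_disjointBlockLists_succ.1 hl
    obtain ⟨hAk, hAl⟩ := mem_freshBlocks.1 hA
    rw [blockUnion_cons, card_union_of_disjoint hAl, hAk, ih hl']
    ring

lemma card_freshBlocks_of_mem_disjointBlockLists (hl : l ∈ disjointBlockLists V k i) :
    #(freshBlocks k l) = (Fintype.card V - k * i).choose k := by
  rw [freshBlocks, card_powersetCard, card_sdiff_of_subset (subset_univ _),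
    card_blockUnion_of_mem_disjointBlockLists hl, card_univ]

lemma sum_disjointBlockLists_succ {M : Type*} [AddCommMonoid M] (f : List (Finset V) → M) :
    ∑ l ∈ disjointBlockLists V k (i + 1), f l =
      ∑ l ∈ disjointBlockLists V k i, ∑ A ∈ freshBlocks k l, f (A :: l) := by
  rw [disjointBlockLists, sum_biUnion]
  · exact sum_congr rfl fun l _ => sum_image fun _ _ _ _ h => (List.cons.inj h).1
  · intro l _ l' _ hne
    simp only [Function.onFun, disjoint_left, mem_image]
    rintro _ ⟨A, -, rfl⟩ ⟨B, -, h⟩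
    exact hne (List.cons.inj h).2.symm

lemma card_disjointBlockLists_succ :
    #(disjointBlockLists V k (i + 1)) =
      (Fintype.card V - k * i).choose k * #(disjointBlockLists V k i) := by
  rw [card_eq_sum_ones, sum_disjointBlockLists_succ, card_eq_sum_ones (disjointBlockLists V k i),
    mul_sum]
  refine sum_congr rfl fun l hl => ?_
  rw [← card_eq_sum_ones, card_freshBlocks_of_mem_disjointBlockLists hl, mul_one]

lemma disjointBlockLists_nonempty (h : k * i ≤ Fintype.card V) :
    (disjointBlockLists V k i).Nonempty := by
  induction i with
  | zero => simp [disjointBlockLists]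
  | succ i ih =>
    rw [Nat.mul_succ] at h
    rw [← card_pos, card_disjointBlockLists_succ]
    exact Nat.mul_pos (Nat.choose_pos (by omega)) (card_pos.2 (ih (by omega)))

end DisjointBlockLists

def goodCount (𝒜 : Finset (Finset V)) (l : List (Finset V)) : ℕ := l.countP (· ∈ 𝒜)

omit [Fintype V] in
lemma goodCount_cons (𝒜 : Finset (Finset V)) (A : Finset V) (l : List (Finset V)) :
    goodCount 𝒜 (A :: l) = goodCount 𝒜 l + if A ∈ 𝒜 then 1 else 0 := by
  simp [goodCount, List.countP_cons]

omit [Fintype V] in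
lemma goodCount_eq_card_filter {𝒜 : Finset (Finset V)} {l : List (Finset V)} (hl : l.Nodup) :
    goodCount 𝒜 l = #{A ∈ l.toFinset | A ∈ 𝒜} := by
  rw [goodCount, List.countP_eq_length_filter, ← List.toFinset_card_of_nodup (hl.filter _),
    List.toFinset_filter]
  simp

section Counting

variable {𝒜 : Finset (Finset V)} {k m : ℕ} {q μ : ℝ}

lemma sum_freshBlocks_pow_le (hμ1 : μ ≤ 1) (l : List (Finset V))
    (hq : q * #(freshBlocks k l) ≤ #{A ∈ freshBlocks k l | A ∈ 𝒜}) :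
    ∑ A ∈ freshBlocks k l, μ ^ (if A ∈ 𝒜 then 1 else 0) ≤
      (1 - (1 - μ) * q) * #(freshBlocks k l) := by
  have hsplit : (#(freshBlocks k l) : ℝ) =
      #{A ∈ freshBlocks k l | A ∈ 𝒜} + #{A ∈ freshBlocks k l | A ∉ 𝒜} := by
    exact_mod_cast (card_filter_add_card_filter_not _).symm
  simp only [pow_ite, pow_one, pow_zero, sum_ite, sum_const, nsmul_eq_mul, mul_one]
  nlinarith [mul_nonneg (sub_nonneg.2 hμ1) (sub_nonneg.2 hq)]

theorem sum_pow_goodCount_le (hq : q ≤ 1) (hμ0 : 0 ≤ μ) (hμ1 : μ ≤ 1)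
    (hfresh : ∀ i < m, ∀ l ∈ disjointBlockLists V k i,
      q * #(freshBlocks k l) ≤ #{A ∈ freshBlocks k l | A ∈ 𝒜}) :
    ∑ l ∈ disjointBlockLists V k m, μ ^ goodCount 𝒜 l ≤
      (1 - (1 - μ) * q) ^ m * #(disjointBlockLists V k m) := by
  induction m with
  | zero => simp [disjointBlockLists, goodCount]
  | succ m ih =>
    have hρ : 0 ≤ 1 - (1 - μ) * q := by nlinarith
    calc ∑ l ∈ disjointBlockLists V k (m + 1), μ ^ goodCount 𝒜 l
        = ∑ l ∈ disjointBlockLists V k m, μ ^ goodCount 𝒜 l *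
            ∑ A ∈ freshBlocks k l, μ ^ (if A ∈ 𝒜 then 1 else 0) := by
          simp only [sum_disjointBlockLists_succ, goodCount_cons, pow_add, mul_sum]
      _ ≤ ∑ l ∈ disjointBlockLists V k m, μ ^ goodCount 𝒜 l *
            ((1 - (1 - μ) * q) * ((Fintype.card V - k * m).choose k : ℕ)) := by
          gcongr with l hl
          rw [← card_freshBlocks_of_mem_disjointBlockLists hl]
          exact sum_freshBlocks_pow_le hμ1 l (hfresh m (by omega) l hl)
      _ = (1 - (1 - μ) * q) * ((Fintype.card V - k * m).choose k : ℕ) *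
            ∑ l ∈ disjointBlockLists V k m, μ ^ goodCount 𝒜 l := by
          rw [← sum_mul, mul_comm]
      _ ≤ (1 - (1 - μ) * q) * ((Fintype.card V - k * m).choose k : ℕ) *
            ((1 - (1 - μ) * q) ^ m * #(disjointBlockLists V k m)) := by
          gcongr
          exact ih fun i hi => hfresh i (by omega)
      _ = (1 - (1 - μ) * q) ^ (m + 1) * #(disjointBlockLists V k (m + 1)) := by
          rw [card_disjointBlockLists_succ]
          push_cast
          ring

theorem card_filter_goodCount_lt_mul_pow_le (hq : q ≤ 1) (hμ0 : 0 ≤ μ) (hμ1 : μ ≤ 1)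
    (hfresh : ∀ i < m, ∀ l ∈ disjointBlockLists V k i,
      q * #(freshBlocks k l) ≤ #{A ∈ freshBlocks k l | A ∈ 𝒜}) (t : ℕ) :
    #{l ∈ disjointBlockLists V k m | goodCount 𝒜 l < t} * μ ^ t ≤
      (1 - (1 - μ) * q) ^ m * #(disjointBlockLists V k m) :=
  calc (#{l ∈ disjointBlockLists V k m | goodCount 𝒜 l < t} : ℝ) * μ ^ t
      = ∑ l ∈ disjointBlockLists V k m with goodCount 𝒜 l < t, μ ^ t := by
        rw [sum_const, nsmul_eq_mul]
    _ ≤ ∑ l ∈ disjointBlockLists V k m with goodCount 𝒜 l < t, μ ^ goodCount 𝒜 l :=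
        sum_le_sum fun l hl => pow_le_pow_of_le_one hμ0 hμ1 (mem_filter.1 hl).2.le
    _ ≤ ∑ l ∈ disjointBlockLists V k m, μ ^ goodCount 𝒜 l :=
        sum_le_sum_of_subset_of_nonneg (filter_subset _ _) fun _ _ _ => by positivity
    _ ≤ _ := sum_pow_goodCount_le hq hμ0 hμ1 hfresh

end Counting

theorem exists_mem_disjointBlockLists_forall_le_goodCount {ι : Type*} (𝒮 : Finset ι)
    (𝒜 : ι → Finset (Finset V)) {k m t : ℕ} {q μ : ℝ} (hq : q ≤ 1) (hμ0 : 0 < μ) (hμ1 : μ ≤ 1)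
    (hkm : k * m ≤ Fintype.card V)
    (hfresh : ∀ S ∈ 𝒮, ∀ i < m, ∀ l ∈ disjointBlockLists V k i,
      q * #(freshBlocks k l) ≤ #{A ∈ freshBlocks k l | A ∈ 𝒜 S})
    (hsmall : #𝒮 * (1 - (1 - μ) * q) ^ m < μ ^ t) :
    ∃ l ∈ disjointBlockLists V k m, ∀ S ∈ 𝒮, t ≤ goodCount (𝒜 S) l := by
  by_contra! hbad
  have hcover : disjointBlockLists V k m ⊆
      𝒮.biUnion fun S => {l ∈ disjointBlockLists V k m | goodCount (𝒜 S) l < t} := fun l hl => by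
    obtain ⟨S, hS, hlt⟩ := hbad l hl
    exact mem_biUnion.2 ⟨S, hS, mem_filter.2 ⟨hl, hlt⟩⟩
  have hpos : (0 : ℝ) < #(disjointBlockLists V k m) := by
    exact_mod_cast (disjointBlockLists_nonempty hkm).card_pos
  have hunion : (#(disjointBlockLists V k m) : ℝ) * μ ^ t ≤
      #𝒮 * (1 - (1 - μ) * q) ^ m * #(disjointBlockLists V k m) :=
    calc (#(disjointBlockLists V k m) : ℝ) * μ ^ t
        ≤ ((∑ S ∈ 𝒮, #{l ∈ disjointBlockLists V k m | goodCount (𝒜 S) l < t} : ℕ) : ℝ) *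
            μ ^ t := by
          gcongr
          exact (card_le_card hcover).trans card_biUnion_le
      _ = ∑ S ∈ 𝒮, (#{l ∈ disjointBlockLists V k m | goodCount (𝒜 S) l < t} : ℝ) * μ ^ t := by
          push_cast
          rw [sum_mul]
      _ ≤ ∑ _S ∈ 𝒮, (1 - (1 - μ) * q) ^ m * #(disjointBlockLists V k m) :=
          sum_le_sum fun S hS =>
            card_filter_goodCount_lt_mul_pow_le hq hμ0.le hμ1 (hfresh S hS) t
      _ = #𝒮 * (1 - (1 - μ) * q) ^ m * #(disjointBlockLists V k m) := by
          rw [sum_const, nsmul_eq_mul, mul_assoc]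
  linarith [mul_lt_mul_of_pos_right hsmall hpos]

omit [Fintype V] in
lemma exists_finset_of_pairwise_disjoint {ι : Type*} (𝒮 : Finset ι) (𝒜 : ι → Finset (Finset V))
    {k : ℕ} (hk : k ≠ 0) {l : List (Finset V)} (hlk : ∀ A ∈ l, #A = k) (hl : l.Pairwise Disjoint) :
    ∃ ℱ : Finset (Finset V), (∀ A ∈ ℱ, #A = k) ∧ (∀ A ∈ ℱ, ∀ B ∈ ℱ, A ≠ B → Disjoint A B) ∧
      #ℱ ≤ l.length ∧ (∀ A ∈ ℱ, ∃ S ∈ 𝒮, A ∈ 𝒜 S) ∧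
      ∀ S ∈ 𝒮, goodCount (𝒜 S) l ≤ #{A ∈ ℱ | A ∈ 𝒜 S} := by
  have hnodup : l.Nodup := hl.imp_of_mem fun {A} _ hA _ hAB hAA => by
    subst hAA
    exact hk ((hlk A hA).symm.trans (by rw [disjoint_self.1 hAB]; rfl))
  have hmem : ∀ {A}, A ∈ {A ∈ l.toFinset | ∃ S ∈ 𝒮, A ∈ 𝒜 S} → A ∈ l := fun hA =>
    List.mem_toFinset.1 (mem_filter.1 hA).1
  refine ⟨{A ∈ l.toFinset | ∃ S ∈ 𝒮, A ∈ 𝒜 S}, fun A hA => hlk A (hmem hA),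
    fun A hA B hB => hl.forall (hmem hA) (hmem hB),
    (card_filter_le _ _).trans (List.toFinset_card_le l), fun A hA => (mem_filter.1 hA).2,
    fun S hS => ?_⟩
  rw [goodCount_eq_card_filter hnodup]
  exact card_le_card fun A hA => by
    simp only [mem_filter] at hA ⊢
    exact ⟨⟨hA.1, S, hS, hA.2⟩, hA.2⟩

lemma mul_card_freshBlocks_le_card_filter_mem {𝒜 : Finset (Finset V)} {β : ℝ} (hβ : β ≤ 1 / 4)
    (h𝒜 : ∀ A ∈ 𝒜, #A = 34) (hcard : β ^ 4 * Fintype.card V ^ 34 / 2 ≤ #𝒜) {i : ℕ}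
    {l : List (Finset V)} (hl : l ∈ disjointBlockLists V 34 i)
    (hi : (34 * i : ℝ) ≤ β ^ 5 * Fintype.card V) :
    β ^ 4 / 4 * #(freshBlocks 34 l) ≤ #{A ∈ freshBlocks 34 l | A ∈ 𝒜} := by
  have hfresh : (#(freshBlocks 34 l) : ℝ) ≤ (Fintype.card V : ℝ) ^ 34 := by
    exact_mod_cast card_le_pow_of_forall_card_eq fun A hA => (mem_freshBlocks.1 hA).1
  have hcover : (#𝒜 : ℝ) ≤
      #{A ∈ freshBlocks 34 l | A ∈ 𝒜} + 34 * i * (Fintype.card V : ℝ) ^ 33 := by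
    have := card_le_card_filter_mem_freshBlocks_add h𝒜 l
    rw [card_blockUnion_of_mem_disjointBlockLists hl] at this
    exact_mod_cast this
  set n : ℝ := (Fintype.card V : ℝ)
  have hused : 34 * i * n ^ 33 ≤ β ^ 4 * n ^ 34 / 4 :=
    calc 34 * i * n ^ 33 ≤ β ^ 5 * n * n ^ 33 := by gcongr
      _ = β * (β ^ 4 * n ^ 34) := by ring
      _ ≤ 1 / 4 * (β ^ 4 * n ^ 34) := by gcongr
      _ = β ^ 4 * n ^ 34 / 4 := by ring
  have hscaled : β ^ 4 / 4 * #(freshBlocks 34 l) ≤ β ^ 4 / 4 * n ^ 34 := by gcongr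
  linarith

lemma cube_mul_pow_lt_half_pow {β : ℝ} {n : ℕ} (hβ0 : 0 < β) (hβ : β ≤ 1 / 1000)
    (hn : 10 ^ 13 / β ^ 36 ≤ n) :
    (n : ℝ) ^ 3 * (1 - β ^ 4 / 8) ^ ⌊β ^ 5 * n / 34⌋₊ < (1 / 2) ^ ⌈β ^ 10 * n⌉₊ := by
  set m := ⌊β ^ 5 * n / 34⌋₊
  set t := ⌈β ^ 10 * n⌉₊
  have hβ1 : β ≤ 1 := by linarith
  have hbase : 0 ≤ 1 - β ^ 4 / 8 := by nlinarith [pow_le_one₀ (n := 4) hβ0.le hβ1]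
  have hlarge : 10 ^ 13 ≤ β ^ 36 * n := by rwa [div_le_iff₀' (by positivity)] at hn
  have hβ9 : β ^ 36 * n ≤ β ^ 9 * n :=
    mul_le_mul_of_nonneg_right (pow_le_pow_of_le_one hβ0.le hβ1 (by norm_num)) (Nat.cast_nonneg n)
  have hgap : β ^ 9 * n / 800 ≤ β ^ 4 * m / 8 - t := by
    have hm : β ^ 5 * n / 34 - 1 ≤ m := (Nat.sub_one_lt_floor _).le
    have ht : (t : ℝ) < β ^ 10 * n + 1 := Nat.ceil_lt_add_one (by positivity)
    have hβ4 : β ^ 4 ≤ 1 := pow_le_one₀ hβ0.le hβ1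
    have hm4 : β ^ 9 * n / 34 - β ^ 4 ≤ β ^ 4 * m :=
      calc β ^ 9 * n / 34 - β ^ 4 = β ^ 4 * (β ^ 5 * n / 34 - 1) := by ring
        _ ≤ β ^ 4 * m := by gcongr
    have ht10 : β ^ 10 * n ≤ β ^ 9 * n / 1000 :=
      calc β ^ 10 * n = β * (β ^ 9 * n) := by ring
        _ ≤ 1 / 1000 * (β ^ 9 * n) := by gcongr
        _ = β ^ 9 * n / 1000 := by ring
    linarith
  have hcube : (n : ℝ) ^ 3 < Real.exp (β ^ 4 * m / 8 - t) := by
    have hn0 : (0 : ℝ) < n := lt_of_lt_of_le (by positivity) hn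
    calc (n : ℝ) ^ 3 < β ^ 36 * n * n ^ 3 / (24 * 800 ^ 4) := by
          rw [lt_div_iff₀ (by positivity)]
          nlinarith [pow_pos hn0 3]
      _ = (β ^ 9 * n / 800) ^ 4 / (Nat.factorial 4 : ℕ) := by
          simp only [Nat.factorial]
          ring
      _ ≤ Real.exp (β ^ 9 * n / 800) := Real.pow_div_factorial_le_exp _ (by positivity) 4
      _ ≤ Real.exp (β ^ 4 * m / 8 - t) := Real.exp_le_exp.2 hgap
  have hexp : Real.exp (-1) ≤ 1 / 2 := by
    rw [Real.exp_neg, one_div]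
    exact inv_anti₀ (by norm_num) (by linarith [Real.add_one_le_exp 1])
  calc (n : ℝ) ^ 3 * (1 - β ^ 4 / 8) ^ m ≤ n ^ 3 * Real.exp (-(β ^ 4 / 8)) ^ m := by
        gcongr
        exact Real.one_sub_le_exp_neg _
    _ = n ^ 3 * Real.exp (-(β ^ 4 * m / 8)) := by
        rw [← Real.exp_nat_mul]
        ring_nf
    _ < Real.exp (β ^ 4 * m / 8 - t) * Real.exp (-(β ^ 4 * m / 8)) := by gcongr
    _ = Real.exp (-1) ^ t := by
        rw [← Real.exp_add, ← Real.exp_nat_mul]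
        ring_nf
    _ ≤ (1 / 2) ^ t := by gcongr

theorem exists_list_forall_le_goodCount {ι : Type*} (𝒮 : Finset ι) (𝒜 : ι → Finset (Finset V))
    {β : ℝ} (hβ0 : 0 < β) (hβ : β ≤ 1 / 1000) (hn : 10 ^ 13 / β ^ 36 ≤ Fintype.card V)
    (h𝒮 : #𝒮 ≤ Fintype.card V ^ 3) (h𝒜 : ∀ S ∈ 𝒮, ∀ A ∈ 𝒜 S, #A = 34)
    (hcard : ∀ S ∈ 𝒮, β ^ 4 * Fintype.card V ^ 34 / 2 ≤ #(𝒜 S)) :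
    ∃ l : List (Finset V), (l.length : ℝ) ≤ β ^ 5 * Fintype.card V / 34 ∧
      (∀ A ∈ l, #A = 34) ∧ l.Pairwise Disjoint ∧
      ∀ S ∈ 𝒮, β ^ 10 * Fintype.card V ≤ goodCount (𝒜 S) l := by
  set n := Fintype.card V
  set m := ⌊β ^ 5 * n / 34⌋₊
  have hm : (m : ℝ) ≤ β ^ 5 * n / 34 := Nat.floor_le (by positivity)
  have hβ1 : β ≤ 1 := by linarith
  have hβ5 : β ^ 5 ≤ 1 := pow_le_one₀ hβ0.le hβ1
  have hmn : 34 * m ≤ n := by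
    have : (34 * m : ℝ) ≤ n := by nlinarith
    exact_mod_cast this
  have hsmall : #𝒮 * (1 - (1 - 1 / 2) * (β ^ 4 / 4)) ^ m < (1 / 2) ^ ⌈β ^ 10 * n⌉₊ :=
    calc #𝒮 * (1 - (1 - 1 / 2) * (β ^ 4 / 4)) ^ m = #𝒮 * (1 - β ^ 4 / 8) ^ m := by ring_nf
      _ ≤ (n : ℝ) ^ 3 * (1 - β ^ 4 / 8) ^ m := by
        have hbase : 0 ≤ 1 - β ^ 4 / 8 := by nlinarith [pow_le_one₀ (n := 4) hβ0.le hβ1]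
        gcongr
        exact_mod_cast h𝒮
      _ < _ := cube_mul_pow_lt_half_pow hβ0 hβ hn
  obtain ⟨l, hl, hgood⟩ := exists_mem_disjointBlockLists_forall_le_goodCount 𝒮 𝒜
    (by nlinarith [pow_le_one₀ (n := 4) hβ0.le hβ1]) (by norm_num) (by norm_num)
    hmn (fun S hS i hi l' hl' => by
      have : (i : ℝ) + 1 ≤ m := by exact_mod_cast hi
      exact mul_card_freshBlocks_le_card_filter_mem (by linarith) (h𝒜 S hS) (hcard S hS) hl'
        (by linarith)) hsmall
  exact ⟨l, by rw [length_of_mem_disjointBlockLists hl]; exact hm,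
    fun A => card_of_mem_of_mem_disjointBlockLists hl,
    pairwise_disjoint_of_mem_disjointBlockLists hl,
    fun S hS => (Nat.le_ceil _).trans (by exact_mod_cast hgood S hS)⟩

theorem exists_sparse_disjoint_family (𝒮 : Set (Finset V)) (h𝒮 : ∀ S ∈ 𝒮, #S = 3)
    (𝒜 : Finset V → Set (Finset V)) {β : ℝ} (hβ0 : 0 < β) (hβ : β ≤ 1 / 1000)
    (hn : 10 ^ 13 / β ^ 36 ≤ Fintype.card V) (h𝒜 : ∀ S ∈ 𝒮, ∀ A ∈ 𝒜 S, #A = 34)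
    (hcard : ∀ S ∈ 𝒮, β ^ 4 * Fintype.card V ^ 34 / 2 ≤ (𝒜 S).ncard) :
    ∃ ℱ : Finset (Finset V), (∀ A ∈ ℱ, #A = 34) ∧ (∀ A ∈ ℱ, ∀ B ∈ ℱ, A ≠ B → Disjoint A B) ∧
      #ℱ ≤ β ^ 5 * Fintype.card V / 34 ∧ (∀ A ∈ ℱ, ∃ S ∈ 𝒮, A ∈ 𝒜 S) ∧
      ∀ S ∈ 𝒮, β ^ 10 * Fintype.card V ≤ {A | A ∈ ℱ ∧ A ∈ 𝒜 S}.ncard := by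
  have h𝒮' : ∀ S, S ∈ 𝒮.toFinite.toFinset ↔ S ∈ 𝒮 := fun S => Set.Finite.mem_toFinset _
  have h𝒜' : ∀ S A, A ∈ (𝒜 S).toFinite.toFinset ↔ A ∈ 𝒜 S := fun S A =>
    Set.Finite.mem_toFinset _
  obtain ⟨l, hlen, hl34, hl, hgood⟩ := exists_list_forall_le_goodCount 𝒮.toFinite.toFinset
    (fun S => (𝒜 S).toFinite.toFinset) hβ0 hβ hn
    (card_le_pow_of_forall_card_eq fun S hS => h𝒮 S ((h𝒮' S).1 hS))
    (fun S hS A hA => h𝒜 S ((h𝒮' S).1 hS) A ((h𝒜' S A).1 hA))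
    (fun S hS => by
      rw [← Set.ncard_eq_toFinset_card]
      exact hcard S ((h𝒮' S).1 hS))
  obtain ⟨ℱ, h34, hdisj, hℱ, hcover, hcount⟩ :=
    exists_finset_of_pairwise_disjoint _ _ (by norm_num) hl34 hl
  refine ⟨ℱ, h34, hdisj, le_trans (by exact_mod_cast hℱ) hlen, fun A hA => ?_, fun S hS => ?_⟩
  · obtain ⟨S, hS, hA⟩ := hcover A hA
    exact ⟨S, (h𝒮' S).1 hS, (h𝒜' S A).1 hA⟩
  · calc β ^ 10 * Fintype.card V ≤ #{A ∈ ℱ | A ∈ (𝒜 S).toFinite.toFinset} :=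
          (hgood S ((h𝒮' S).2 hS)).trans (by exact_mod_cast hcount S ((h𝒮' S).2 hS))
      _ = {A | A ∈ ℱ ∧ A ∈ 𝒜 S}.ncard := by
          rw [← Set.ncard_coe_finset, coe_filter]
          simp only [h𝒜']

end AbsorberSelection

def absorberVertexSets (H : Finset (Finset V)) (S : Finset V) : Set (Finset V) :=
  {A | Disjoint A S ∧ A.card = 34 ∧ ∃ Ps : List (List V), IsAbsorber H S Ps ∧ famVerts Ps = A}

open AbsorberSelection in
theorem statement19 :
    ∃ β₀ : ℝ, 0 < β₀ ∧ ∀ β : ℝ, 0 < β → β ≤ β₀ → ∃ n₀ : ℕ, ∀ n : ℕ, n₀ ≤ n →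
    ∀ H : Finset (Finset (Fin n)), (∀ e ∈ H, e.card = 3) →
    ∀ 𝒮 : Set (Finset (Fin n)), (∀ S ∈ 𝒮, S.card = 3) →
    (∀ S ∈ 𝒮, β ^ 4 * (n : ℝ) ^ 34 / 2 ≤
      (({A : Finset (Fin n) | Disjoint A S ∧ A.card = 34 ∧
          ∃ Ps : List (List (Fin n)), IsAbsorber H S Ps ∧ famVerts Ps = A} :
          Set (Finset (Fin n))).ncard : ℝ)) →
    ∃ ℱ : Finset (Finset (Fin n)),
      (∀ A ∈ ℱ, A.card = 34) ∧
      (∀ A ∈ ℱ, ∀ B ∈ ℱ, A ≠ B → Disjoint A B) ∧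
      ((ℱ.card : ℝ) ≤ β ^ 5 * n / 34) ∧
      (∀ A ∈ ℱ, ∃ S ∈ 𝒮, ∃ Ps : List (List (Fin n)), IsAbsorber H S Ps ∧ famVerts Ps = A) ∧
      (∀ S ∈ 𝒮, β ^ 10 * (n : ℝ) ≤
        (({A : Finset (Fin n) | A ∈ ℱ ∧ Disjoint A S ∧
            ∃ Ps : List (List (Fin n)), IsAbsorber H S Ps ∧ famVerts Ps = A} :
            Set (Finset (Fin n))).ncard : ℝ)) := by
  refine ⟨1 / 1000, by norm_num, fun β hβ0 hβ =>
    ⟨⌈10 ^ 13 / β ^ 36⌉₊, fun n hn H _ 𝒮 h𝒮 habs => ?_⟩⟩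
  obtain ⟨ℱ, h34, hdisj, hℱ, hcover, hcount⟩ :=
    exists_sparse_disjoint_family 𝒮 h𝒮 (absorberVertexSets H) hβ0 hβ
      (by simpa using Nat.ceil_le.1 hn) (fun _ _ _ hA => hA.2.1)
      (fun S hS => by rw [Fintype.card_fin]; exact habs S hS)
  simp only [Fintype.card_fin] at hℱ hcount
  refine ⟨ℱ, h34, hdisj, hℱ, fun A hA => ?_, fun S hS => (hcount S hS).trans ?_⟩
  · obtain ⟨S, hS, -, -, hPs⟩ := hcover A hA
    exact ⟨S, hS, hPs⟩
  · exact Nat.cast_le.2 <|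
      Set.ncard_le_ncard (fun A ⟨hA, hd, _, hPs⟩ => ⟨hA, hd, hPs⟩) (Set.toFinite _)
end
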